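/- arXiv:1406.3669 — 4 statements merged into one kernel-verified Lean document; each statement's English description precedes it below -/
import Mathlib

section
/- With the notation of the parametric family C(Q) above, the functions L_j(q) = log λ_j(C(e^q)) for j = 1,…,N are continuous and piecewise linear with slopes 0 and 1; moreover, at each point q > 0 where L_1 changes slope from 1 to 0, one has L_1(q) = L_2(q). -/
open scoped RealInnerProductSpace Pointwise
open Finset

noncomputable section

/-- The `j`-th successive minimum of `C` with respect to the lattice `L`. -/
def minkMin {V : Type*} [AddCommGroup V] [Module ℝ V]
    (L : Set V) (C : Set V) (j : ℕ) : ℝ :=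
  sInf {r : ℝ | 0 < r ∧ ∃ t : Finset V, ↑t ⊆ L ∩ (r • C) ∧ j ≤ t.card ∧
    LinearIndependent ℝ (fun v : t => (v : V))}

/-- `f` is piecewise linear with slopes `0` and `1` on `[q₀,∞)`: its right
derivative at each point `q ≥ q₀` is `0` or `1`, and likewise its left
derivative at each point `q > q₀`. -/
def Slope01 (f : ℝ → ℝ) (q₀ : ℝ) : Prop :=
  (∀ q, q₀ ≤ q → HasDerivWithinAt f 0 (Set.Ici q) q ∨ HasDerivWithinAt f 1 (Set.Ici q) q) ∧
  (∀ q, q₀ < q → HasDerivWithinAt f 0 (Set.Iic q) q ∨ HasDerivWithinAt f 1 (Set.Iic q) q)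

/-- `f` changes slope from `1` to `0` at `q`. -/
def ChangesSlope (f : ℝ → ℝ) (q : ℝ) : Prop :=
  HasDerivWithinAt f 1 (Set.Iic q) q ∧ HasDerivWithinAt f 0 (Set.Ici q) q

namespace Stmt2Aux

open Set Real

/-! ### Elementary piecewise-linear functions -/

/-- elementary functions: constants or `q ↦ max a (q+b)` -/
def Elem (f : ℝ → ℝ) : Prop :=
  (∃ a, f = fun _ => a) ∨ ∃ a b, f = fun q => max a (q + b)

lemma Elem.max' {f g : ℝ → ℝ} (hf : Elem f) (hg : Elem g) :
    Elem (fun q => max (f q) (g q)) := by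
  rcases hf with ⟨a, rfl⟩ | ⟨a, b, rfl⟩ <;> rcases hg with ⟨a', rfl⟩ | ⟨a', b', rfl⟩
  · exact Or.inl ⟨max a a', rfl⟩
  · exact Or.inr ⟨max a' a, b', by funext q; dsimp only; ac_rfl⟩
  · exact Or.inr ⟨max a a', b, by funext q; dsimp only; ac_rfl⟩
  · refine Or.inr ⟨max a a', max b b', ?_⟩
    funext q
    dsimp only
    rw [max_max_max_comm, max_add_add_left]

lemma Elem.right {f : ℝ → ℝ} (hf : Elem f) (q : ℝ) :
    ∃ c ∈ ({0, 1} : Set ℝ), ∃ ε > 0, ∀ s ∈ Icc q (q + ε), f s = f q + c * (s - q) := by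
  rcases hf with ⟨a, rfl⟩ | ⟨a, b, rfl⟩
  · exact ⟨0, by simp, 1, one_pos, fun s _ => by ring⟩
  · rcases lt_or_ge q (a - b) with h | h
    · refine ⟨0, by simp, a - b - q, by linarith, fun s hs => ?_⟩
      dsimp only
      rw [max_eq_left (by linarith [hs.2] : s + b ≤ a),
        max_eq_left (by linarith : q + b ≤ a)]
      ring
    · refine ⟨1, by simp, 1, one_pos, fun s hs => ?_⟩
      dsimp only
      rw [max_eq_right (by linarith [hs.1] : a ≤ s + b),
        max_eq_right (by linarith : a ≤ q + b)]
      ring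

lemma Elem.left {f : ℝ → ℝ} (hf : Elem f) (q : ℝ) :
    ∃ c ∈ ({0, 1} : Set ℝ), ∃ ε > 0, ∀ s ∈ Icc (q - ε) q, f s = f q + c * (s - q) := by
  rcases hf with ⟨a, rfl⟩ | ⟨a, b, rfl⟩
  · exact ⟨0, by simp, 1, one_pos, fun s _ => by ring⟩
  · rcases lt_or_ge (a - b) q with h | h
    · refine ⟨1, by simp, q - (a - b), by linarith, fun s hs => ?_⟩
      dsimp only
      rw [max_eq_right (by linarith [hs.1] : a ≤ s + b),
        max_eq_right (by linarith : a ≤ q + b)]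
      ring
    · refine ⟨0, by simp, 1, one_pos, fun s hs => ?_⟩
      dsimp only
      rw [max_eq_left (by linarith [hs.2] : s + b ≤ a),
        max_eq_left (by linarith : q + b ≤ a)]
      ring

/-! ### Local behaviour of a finite minimum of elementary functions -/

lemma min_local_right {ι : Type*} (𝒯 : Finset ι) (h𝒯 : 𝒯.Nonempty) (F : ι → ℝ → ℝ)
    (hF : ∀ i ∈ 𝒯, Elem (F i)) (q : ℝ) :
    ∃ c ∈ ({0, 1} : Set ℝ), ∃ ε > 0,
      (∀ s ∈ Icc q (q + ε), 𝒯.inf' h𝒯 (fun i => F i s) = 𝒯.inf' h𝒯 (fun i => F i q) + c * (s - q)) ∧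
      ∃ i ∈ 𝒯, F i q = 𝒯.inf' h𝒯 (fun i => F i q) ∧
        ∀ s ∈ Icc q (q + ε), F i s = F i q + c * (s - q) := by
  classical
  set fq := 𝒯.inf' h𝒯 (fun i => F i q) with hfq
  have H : ∀ i ∈ 𝒯, ∃ c ∈ ({0, 1} : Set ℝ), ∃ ε > 0,
      ∀ s ∈ Icc q (q + ε), F i s = F i q + c * (s - q) := fun i hi => (hF i hi).right q
  choose! c hc ε hε hlin using H
  have hc01 : ∀ i ∈ 𝒯, c i = 0 ∨ c i = 1 := fun i hi => by simpa using hc i hi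
  have hc0 : ∀ i ∈ 𝒯, 0 ≤ c i := by
    intro i hi; rcases hc01 i hi with h | h <;> simp [h]
  have hc1 : ∀ i ∈ 𝒯, c i ≤ 1 := by
    intro i hi; rcases hc01 i hi with h | h <;> simp [h]
  set A := 𝒯.filter (fun i => F i q = fq) with hA
  have hAne : A.Nonempty := by
    obtain ⟨i, hi, hieq⟩ := 𝒯.exists_mem_eq_inf' h𝒯 (fun i => F i q)
    exact ⟨i, by simp [hA, hi, hieq.symm, hfq]⟩
  have hAsub : A ⊆ 𝒯 := filter_subset _ _
  obtain ⟨i₀, hi₀A, hi₀eq⟩ := A.exists_mem_eq_inf' hAne c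
  set c' := A.inf' hAne c with hc'
  have hi₀T : i₀ ∈ 𝒯 := hAsub hi₀A
  have hi₀act : F i₀ q = fq := (mem_filter.1 hi₀A).2
  have hc'mem : c' ∈ ({0, 1} : Set ℝ) := hi₀eq ▸ hc i₀ hi₀T
  have hc'0 : 0 ≤ c' := hi₀eq ▸ hc0 i₀ hi₀T
  have hc'1 : c' ≤ 1 := hi₀eq ▸ hc1 i₀ hi₀T
  set ε' := 𝒯.inf' h𝒯 (fun i => if F i q = fq then ε i else min (ε i) ((F i q - fq) / 2)) with hε'
  have hε'pos : 0 < ε' := by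
    rw [hε', Finset.lt_inf'_iff]
    intro i hi
    by_cases hact : F i q = fq
    · simp [hact, hε i hi]
    · have hgt : fq < F i q :=
        lt_of_le_of_ne (hfq ▸ Finset.inf'_le (fun i => F i q) hi) (Ne.symm hact)
      simp only [hact, if_false, lt_min_iff]
      exact ⟨hε i hi, by linarith⟩
  have hε'le : ∀ i ∈ 𝒯, ε' ≤ ε i := by
    intro i hi
    refine le_trans (Finset.inf'_le _ hi) ?_
    by_cases hact : F i q = fq <;> simp [hact, min_le_left]
  refine ⟨c', hc'mem, ε', hε'pos, ?_, i₀, hi₀T, hi₀act, ?_⟩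
  · intro s hs
    have hsq : 0 ≤ s - q := by linarith [hs.1]
    have hkey : ∀ i ∈ 𝒯, fq + c' * (s - q) ≤ F i s := by
      intro i hi
      have hsi : s ∈ Icc q (q + ε i) := ⟨hs.1, le_trans hs.2 (by linarith [hε'le i hi])⟩
      rw [hlin i hi s hsi]
      by_cases hact : F i q = fq
      · rw [hact]
        have : c' ≤ c i := hc' ▸ Finset.inf'_le c (by simp [hA, hi, hact])
        nlinarith
      · have hgt : fq < F i q :=
          lt_of_le_of_ne (hfq ▸ Finset.inf'_le (fun i => F i q) hi) (Ne.symm hact)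
        have h2 : ε' ≤ (F i q - fq) / 2 := by
          refine le_trans (Finset.inf'_le _ hi) ?_
          simp [hact, min_le_right]
        have : s - q ≤ ε' := by linarith [hs.2]
        nlinarith [hc0 i hi, hc'1]
    have hup : 𝒯.inf' h𝒯 (fun i => F i s) ≤ fq + c' * (s - q) := by
      refine le_trans (Finset.inf'_le (fun i => F i s) hi₀T) ?_
      rw [hlin i₀ hi₀T s ⟨hs.1, le_trans hs.2 (by linarith [hε'le i₀ hi₀T])⟩, hi₀act, hi₀eq]
    exact le_antisymm hup (Finset.le_inf' h𝒯 _ hkey)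
  · intro s hs
    rw [hlin i₀ hi₀T s ⟨hs.1, le_trans hs.2 (by linarith [hε'le i₀ hi₀T])⟩, hi₀eq]

lemma min_local_left {ι : Type*} (𝒯 : Finset ι) (h𝒯 : 𝒯.Nonempty) (F : ι → ℝ → ℝ)
    (hF : ∀ i ∈ 𝒯, Elem (F i)) (q : ℝ) :
    ∃ c ∈ ({0, 1} : Set ℝ), ∃ ε > 0,
      (∀ s ∈ Icc (q - ε) q, 𝒯.inf' h𝒯 (fun i => F i s) = 𝒯.inf' h𝒯 (fun i => F i q) + c * (s - q)) ∧
      ∃ i ∈ 𝒯, F i q = 𝒯.inf' h𝒯 (fun i => F i q) ∧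
        ∀ s ∈ Icc (q - ε) q, F i s = F i q + c * (s - q) := by
  classical
  set fq := 𝒯.inf' h𝒯 (fun i => F i q) with hfq
  have H : ∀ i ∈ 𝒯, ∃ c ∈ ({0, 1} : Set ℝ), ∃ ε > 0,
      ∀ s ∈ Icc (q - ε) q, F i s = F i q + c * (s - q) := fun i hi => (hF i hi).left q
  choose! c hc ε hε hlin using H
  have hc01 : ∀ i ∈ 𝒯, c i = 0 ∨ c i = 1 := fun i hi => by simpa using hc i hi
  have hc0 : ∀ i ∈ 𝒯, 0 ≤ c i := by
    intro i hi; rcases hc01 i hi with h | h <;> simp [h]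
  have hc1 : ∀ i ∈ 𝒯, c i ≤ 1 := by
    intro i hi; rcases hc01 i hi with h | h <;> simp [h]
  set A := 𝒯.filter (fun i => F i q = fq) with hA
  have hAne : A.Nonempty := by
    obtain ⟨i, hi, hieq⟩ := 𝒯.exists_mem_eq_inf' h𝒯 (fun i => F i q)
    exact ⟨i, by simp [hA, hi, hieq.symm, hfq]⟩
  have hAsub : A ⊆ 𝒯 := filter_subset _ _
  obtain ⟨i₀, hi₀A, hi₀eq⟩ := A.exists_mem_eq_sup' hAne c
  set c' := A.sup' hAne c with hc'
  have hi₀T : i₀ ∈ 𝒯 := hAsub hi₀A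
  have hi₀act : F i₀ q = fq := (mem_filter.1 hi₀A).2
  have hc'mem : c' ∈ ({0, 1} : Set ℝ) := hi₀eq ▸ hc i₀ hi₀T
  have hc'0 : 0 ≤ c' := hi₀eq ▸ hc0 i₀ hi₀T
  have hc'1 : c' ≤ 1 := hi₀eq ▸ hc1 i₀ hi₀T
  set ε' := 𝒯.inf' h𝒯 (fun i => if F i q = fq then ε i else min (ε i) ((F i q - fq) / 2)) with hε'
  have hε'pos : 0 < ε' := by
    rw [hε', Finset.lt_inf'_iff]
    intro i hi
    by_cases hact : F i q = fq
    · simp [hact, hε i hi]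
    · have hgt : fq < F i q :=
        lt_of_le_of_ne (hfq ▸ Finset.inf'_le (fun i => F i q) hi) (Ne.symm hact)
      simp only [hact, if_false, lt_min_iff]
      exact ⟨hε i hi, by linarith⟩
  have hε'le : ∀ i ∈ 𝒯, ε' ≤ ε i := by
    intro i hi
    refine le_trans (Finset.inf'_le _ hi) ?_
    by_cases hact : F i q = fq <;> simp [hact, min_le_left]
  refine ⟨c', hc'mem, ε', hε'pos, ?_, i₀, hi₀T, hi₀act, ?_⟩
  · intro s hs
    have hsq : s - q ≤ 0 := by linarith [hs.2]
    have hsq' : -(ε') ≤ s - q := by linarith [hs.1]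
    have hkey : ∀ i ∈ 𝒯, fq + c' * (s - q) ≤ F i s := by
      intro i hi
      have hsi : s ∈ Icc (q - ε i) q := ⟨le_trans (by linarith [hε'le i hi]) hs.1, hs.2⟩
      rw [hlin i hi s hsi]
      by_cases hact : F i q = fq
      · rw [hact]
        have : c i ≤ c' := hc' ▸ Finset.le_sup' c (by simp [hA, hi, hact])
        nlinarith
      · have hgt : fq < F i q :=
          lt_of_le_of_ne (hfq ▸ Finset.inf'_le (fun i => F i q) hi) (Ne.symm hact)
        have h2 : ε' ≤ (F i q - fq) / 2 := by
          refine le_trans (Finset.inf'_le _ hi) ?_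
          simp [hact, min_le_right]
        nlinarith [hc0 i hi, hc1 i hi, hc'0]
    have hup : 𝒯.inf' h𝒯 (fun i => F i s) ≤ fq + c' * (s - q) := by
      refine le_trans (Finset.inf'_le (fun i => F i s) hi₀T) ?_
      rw [hlin i₀ hi₀T s ⟨le_trans (by linarith [hε'le i₀ hi₀T]) hs.1, hs.2⟩, hi₀act, hi₀eq]
    exact le_antisymm hup (Finset.le_inf' h𝒯 _ hkey)
  · intro s hs
    rw [hlin i₀ hi₀T s ⟨le_trans (by linarith [hε'le i₀ hi₀T]) hs.1, hs.2⟩, hi₀eq]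

/-! ### From local linearity to one-sided derivatives -/

lemma hdwa_right {f : ℝ → ℝ} {q c ε : ℝ} (hε : 0 < ε)
    (h : ∀ s ∈ Icc q (q + ε), f s = f q + c * (s - q)) :
    HasDerivWithinAt f c (Ici q) q := by
  have hA : HasDerivWithinAt (fun s => f q + c * (s - q)) c (Ici q) q := by
    simpa using (((hasDerivAt_id q).sub_const q).const_mul c).const_add (f q) |>.hasDerivWithinAt
  refine hA.congr_of_eventuallyEq ?_ (by simp)
  filter_upwards [Icc_mem_nhdsGE_of_mem (⟨le_refl q, by linarith⟩ : q ∈ Ico q (q + ε))] with s hs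
  exact h s hs

lemma hdwa_left {f : ℝ → ℝ} {q c ε : ℝ} (hε : 0 < ε)
    (h : ∀ s ∈ Icc (q - ε) q, f s = f q + c * (s - q)) :
    HasDerivWithinAt f c (Iic q) q := by
  have hA : HasDerivWithinAt (fun s => f q + c * (s - q)) c (Iic q) q := by
    simpa using (((hasDerivAt_id q).sub_const q).const_mul c).const_add (f q) |>.hasDerivWithinAt
  refine hA.congr_of_eventuallyEq ?_ (by simp)
  filter_upwards [Icc_mem_nhdsLE_of_mem (⟨by linarith, le_refl q⟩ : q ∈ Ioc (q - ε) q)] with s hs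
  exact h s hs

lemma log_inf' {ι : Type*} (𝒯 : Finset ι) (h : 𝒯.Nonempty) (G : ι → ℝ)
    (hpos : ∀ i ∈ 𝒯, 0 < G i) :
    Real.log (𝒯.inf' h G) = 𝒯.inf' h (fun i => Real.log (G i)) := by
  obtain ⟨i₀, hi₀, heq⟩ := 𝒯.exists_mem_eq_inf' h G
  obtain ⟨i₁, hi₁, heq'⟩ := 𝒯.exists_mem_eq_inf' h (fun i => Real.log (G i))
  rw [heq, heq']
  refine le_antisymm ?_ ?_
  · refine Real.log_le_log (hpos i₀ hi₀) ?_
    rw [← heq]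
    exact Finset.inf'_le _ hi₁
  · rw [← heq']
    exact Finset.inf'_le _ hi₀

/-! ### The gauge function of the bodies `C (exp q)` -/

variable {N : ℕ} (W : Submodule ℝ (EuclideanSpace ℝ (Fin N)))

/-- the gauge of the body `C (exp q)` at `x`. -/
def gg (x : EuclideanSpace ℝ (Fin N)) (q : ℝ) : ℝ :=
  max ‖x‖ (Real.exp q * ‖(Submodule.orthogonalProjectionOnto W x : EuclideanSpace ℝ (Fin N))‖)

lemma gg_pos {x : EuclideanSpace ℝ (Fin N)} (hx : x ≠ 0) (q : ℝ) : 0 < gg W x q :=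
  lt_max_of_lt_left (norm_pos_iff.2 hx)

lemma gg_nonneg (x : EuclideanSpace ℝ (Fin N)) (q : ℝ) : 0 ≤ gg W x q :=
  le_max_of_le_left (norm_nonneg x)

lemma gg_mono (x : EuclideanSpace ℝ (Fin N)) {q q' : ℝ} (h : q ≤ q') :
    gg W x q ≤ gg W x q' :=
  max_le_max (le_refl _) (mul_le_mul_of_nonneg_right (exp_le_exp.2 h) (norm_nonneg _))

lemma elem_phi {x : EuclideanSpace ℝ (Fin N)} (hx : x ≠ 0) :
    Elem (fun q => Real.log (gg W x q)) := by
  set m := ‖(Submodule.orthogonalProjectionOnto W x : EuclideanSpace ℝ (Fin N))‖ with hm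
  rcases eq_or_lt_of_le (norm_nonneg (Submodule.orthogonalProjectionOnto W x : EuclideanSpace ℝ (Fin N)))
    with h0 | h0
  · left
    refine ⟨Real.log ‖x‖, funext fun q => ?_⟩
    rw [gg, ← h0, mul_zero, max_eq_left (norm_nonneg x)]
  · right
    refine ⟨Real.log ‖x‖, Real.log m, funext fun q => ?_⟩
    have hxpos : (0:ℝ) < ‖x‖ := norm_pos_iff.2 hx
    have hem : 0 < Real.exp q * m := mul_pos (exp_pos q) h0
    rw [gg, ← hm]
    rcases le_total ‖x‖ (Real.exp q * m) with h | h
    · rw [max_eq_right h, Real.log_mul (exp_ne_zero q) (ne_of_gt h0), Real.log_exp,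
        max_eq_right ((Real.log_le_log_iff hxpos hem).2 h |>.trans_eq
          (by rw [Real.log_mul (exp_ne_zero q) (ne_of_gt h0), Real.log_exp]))]
    · rw [max_eq_left h, max_eq_left ?_]
      calc q + Real.log m = Real.log (Real.exp q * m) := by
            rw [Real.log_mul (exp_ne_zero q) (ne_of_gt h0), Real.log_exp]
        _ ≤ Real.log ‖x‖ := (Real.log_le_log_iff hem hxpos).2 h

/-- positivity and elementarity of `log ∘ (fold max 0 (gg · q))`. -/
lemma elem_log_fold (t : Finset (EuclideanSpace ℝ (Fin N))) (ht : t.Nonempty)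
    (h0 : ∀ x ∈ t, x ≠ 0) :
    (∀ q, 0 < t.fold max 0 (fun x => gg W x q)) ∧
      Elem (fun q => Real.log (t.fold max 0 (fun x => gg W x q))) := by
  induction ht using Finset.Nonempty.cons_induction with
  | singleton a =>
    have ha : a ≠ 0 := h0 a (by simp)
    constructor
    · intro q
      rw [Finset.fold_singleton, max_eq_left (gg_nonneg W a q)]
      exact gg_pos W ha q
    · have : (fun q => Real.log (({a} : Finset _).fold max 0 (fun x => gg W x q)))
          = fun q => Real.log (gg W a q) := by
        funext q; rw [Finset.fold_singleton, max_eq_left (gg_nonneg W a q)]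
      rw [this]
      exact elem_phi W ha
  | cons a s ha hs ih =>
    have h0' : ∀ x ∈ s, x ≠ 0 := fun x hx => h0 x (Finset.mem_cons_of_mem hx)
    obtain ⟨ihpos, ihelem⟩ := ih h0'
    have ha0 : a ≠ 0 := h0 a (Finset.mem_cons_self a _)
    constructor
    · intro q
      rw [Finset.fold_cons]
      exact lt_max_of_lt_left (gg_pos W ha0 q)
    · have heq : (fun q => Real.log ((Finset.cons a s ha).fold max 0 (fun x => gg W x q)))
          = fun q => max (Real.log (gg W a q)) (Real.log (s.fold max 0 (fun x => gg W x q))) := by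
        funext q
        rw [Finset.fold_cons]
        rcases le_total (gg W a q) (s.fold max 0 (fun x => gg W x q)) with h | h
        · rw [max_eq_right h, max_eq_right ((Real.log_le_log_iff (gg_pos W ha0 q) (ihpos q)).2 h)]
        · rw [max_eq_left h, max_eq_left ((Real.log_le_log_iff (ihpos q) (gg_pos W ha0 q)).2 h)]
      rw [heq]
      exact (elem_phi W ha0).max' ihelem

/-- slope-1 on the left forces the exponential branch strictly. -/
lemma slope_one_left {x : EuclideanSpace ℝ (Fin N)} {q ε : ℝ} (hε : 0 < ε)
    (h : ∀ s ∈ Icc (q - ε) q, Real.log (gg W x s) = Real.log (gg W x q) + 1 * (s - q)) :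
    ‖x‖ < Real.exp q * ‖(Submodule.orthogonalProjectionOnto W x : EuclideanSpace ℝ (Fin N))‖ := by
  by_contra hcon
  push_neg at hcon
  have hflat : ∀ s ∈ Icc (q - ε) q, gg W x s = ‖x‖ := by
    intro s hs
    refine max_eq_left (le_trans ?_ hcon)
    exact mul_le_mul_of_nonneg_right (exp_le_exp.2 hs.2) (norm_nonneg _)
  have h1 := h (q - ε) ⟨le_refl _, by linarith⟩
  rw [hflat (q - ε) ⟨le_refl _, by linarith⟩, hflat q ⟨by linarith, le_refl _⟩] at h1
  linarith [h1]

/-- slope-0 on the right forces the norm branch strictly. -/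
lemma slope_zero_right {x : EuclideanSpace ℝ (Fin N)} (hx : x ≠ 0) {q ε : ℝ} (hε : 0 < ε)
    (h : ∀ s ∈ Icc q (q + ε), Real.log (gg W x s) = Real.log (gg W x q) + 0 * (s - q)) :
    Real.exp q * ‖(Submodule.orthogonalProjectionOnto W x : EuclideanSpace ℝ (Fin N))‖ < ‖x‖ := by
  by_contra hcon
  push_neg at hcon
  set m := ‖(Submodule.orthogonalProjectionOnto W x : EuclideanSpace ℝ (Fin N))‖ with hm
  have hmpos : 0 < m := by
    rcases (norm_nonneg (Submodule.orthogonalProjectionOnto W x : EuclideanSpace ℝ (Fin N))).eq_or_lt with h0 | h0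
    · exfalso
      have hm0 : m = 0 := hm.trans h0.symm
      rw [hm0, mul_zero] at hcon
      exact (norm_pos_iff.2 hx).not_ge hcon
    · exact h0
  have hexp : ∀ s ∈ Icc q (q + ε), gg W x s = Real.exp s * m := by
    intro s hs
    refine max_eq_right (le_trans hcon ?_)
    exact mul_le_mul_of_nonneg_right (exp_le_exp.2 hs.1) (le_of_lt hmpos)
  have h1 := h (q + ε) ⟨by linarith, le_refl _⟩
  rw [hexp (q + ε) ⟨by linarith, le_refl _⟩, hexp q ⟨le_refl _, by linarith⟩,
    Real.log_mul (exp_ne_zero _) (ne_of_gt hmpos), Real.log_mul (exp_ne_zero _) (ne_of_gt hmpos),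
    Real.log_exp, Real.log_exp] at h1
  linarith

/-! ### Membership in dilates of the body -/

lemma mem_smul_C {r q : ℝ} (hr : 0 < r) (x : EuclideanSpace ℝ (Fin N)) :
    x ∈ r • {y : EuclideanSpace ℝ (Fin N) | ‖y‖ ≤ 1 ∧
        ‖(Submodule.orthogonalProjectionOnto W y : EuclideanSpace ℝ (Fin N))‖ ≤ (Real.exp q)⁻¹} ↔
      gg W x q ≤ r := by
  rw [Set.mem_smul_set_iff_inv_smul_mem₀ (ne_of_gt hr)]
  have hproj : (↑(Submodule.orthogonalProjectionOnto W (r⁻¹ • x)) : EuclideanSpace ℝ (Fin N))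
      = r⁻¹ • (Submodule.orthogonalProjectionOnto W x : EuclideanSpace ℝ (Fin N)) := by
    rw [map_smul]; rfl
  simp only [Set.mem_setOf_eq, hproj, norm_smul, norm_inv, Real.norm_eq_abs, abs_of_pos hr]
  rw [inv_mul_eq_div, inv_mul_eq_div, div_le_one hr, div_le_iff₀ hr, inv_mul_eq_div,
    le_div_iff₀ (Real.exp_pos q), gg, max_le_iff, mul_comm]

/-! ### Finiteness of lattice points in balls; full-rank finsets -/

lemma lattice_ball_finite (Λ : Submodule ℤ (EuclideanSpace ℝ (Fin N))) [DiscreteTopology Λ]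
    (R : ℝ) : ((Λ : Set (EuclideanSpace ℝ (Fin N))) ∩ Metric.closedBall 0 R).Finite := by
  have hdisc : DiscreteTopology Λ := inferInstance
  have hclosed : IsClosed (Λ : Set (EuclideanSpace ℝ (Fin N))) := by
    have : DiscreteTopology Λ.toAddSubgroup := hdisc
    exact AddSubgroup.isClosed_of_discrete (H := Λ.toAddSubgroup)
  have hdt : DiscreteTopology ((Λ : Set (EuclideanSpace ℝ (Fin N))) ∩ Metric.closedBall 0 R :
      Set (EuclideanSpace ℝ (Fin N))) := by
    have h1 : DiscreteTopology (Λ : Set (EuclideanSpace ℝ (Fin N))) := hdisc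
    exact DiscreteTopology.of_subset h1 Set.inter_subset_left
  exact ((isCompact_closedBall 0 R).inter_left hclosed).finite (isDiscrete_iff_discreteTopology.mpr hdt)

lemma exists_full_finset (Λ : Submodule ℤ (EuclideanSpace ℝ (Fin N))) [DiscreteTopology Λ]
    [IsZLattice ℝ Λ] :
    ∃ t0 : Finset (EuclideanSpace ℝ (Fin N)),
      (↑t0 : Set (EuclideanSpace ℝ (Fin N))) ⊆ (Λ : Set (EuclideanSpace ℝ (Fin N))) ∧
      t0.card = N ∧ LinearIndependent ℝ (fun v : t0 => (v : EuclideanSpace ℝ (Fin N))) := by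
  classical
  have : Module.Finite ℤ Λ := ZLattice.module_finite ℝ Λ
  have : Module.Free ℤ Λ := ZLattice.module_free ℝ Λ
  let b := Module.Free.chooseBasis ℤ Λ
  let β := Module.Basis.ofZLatticeBasis ℝ Λ b
  refine ⟨Finset.univ.image β, ?_, ?_, ?_⟩
  · intro x hx
    simp only [Finset.coe_image, Finset.coe_univ, Set.image_univ, Set.mem_range] at hx
    obtain ⟨i, rfl⟩ := hx
    rw [Module.Basis.ofZLatticeBasis_apply]
    exact SetLike.coe_mem _
  · rw [Finset.card_image_of_injective _ β.injective, Finset.card_univ,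
      ← Module.finrank_eq_card_chooseBasisIndex, ZLattice.rank ℝ Λ, finrank_euclideanSpace_fin]
  · have hset : (↑(Finset.univ.image β) : Set (EuclideanSpace ℝ (Fin N))) = Set.range β := by
      rw [Finset.coe_image, Finset.coe_univ, Set.image_univ]
    have hli : LinearIndependent ℝ ((↑) : (Set.range β) → EuclideanSpace ℝ (Fin N)) :=
      (linearIndepOn_id_range_iff β.injective).2 β.linearIndependent
    rw [← hset] at hli
    exact hli

/-! ### The local finite representation of the successive minima -/

lemma rep (Λ : Submodule ℤ (EuclideanSpace ℝ (Fin N))) [DiscreteTopology Λ] [IsZLattice ℝ Λ]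
    (j : ℕ) (hj1 : 1 ≤ j) (hjN : j ≤ N) (q₀ : ℝ) :
    ∃ (𝒯 : Finset (Finset (EuclideanSpace ℝ (Fin N)))) (h𝒯 : 𝒯.Nonempty),
      (∀ t ∈ 𝒯, t.Nonempty ∧
        (↑t : Set (EuclideanSpace ℝ (Fin N))) ⊆ (Λ : Set (EuclideanSpace ℝ (Fin N))) ∧
        (∀ x ∈ t, x ≠ 0) ∧ t.card = j ∧
        LinearIndependent ℝ (fun v : t => (v : EuclideanSpace ℝ (Fin N)))) ∧
      ∀ q ∈ Icc (q₀ - 1) (q₀ + 1),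
        minkMin (Λ : Set (EuclideanSpace ℝ (Fin N)))
            {y : EuclideanSpace ℝ (Fin N) | ‖y‖ ≤ 1 ∧
              ‖(Submodule.orthogonalProjectionOnto W y : EuclideanSpace ℝ (Fin N))‖ ≤ (Real.exp q)⁻¹} j
          = 𝒯.inf' h𝒯 (fun t => t.fold max 0 (fun x => gg W x q)) := by
  classical
  obtain ⟨t0, ht0Λ, ht0card, ht0li⟩ := exists_full_finset Λ
  set R := t0.fold max 0 (fun x => gg W x (q₀ + 1)) with hR
  have hR0 : 0 ≤ R := (Finset.le_fold_max _).2 (Or.inl le_rfl)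
  set B := (lattice_ball_finite Λ R).toFinset with hB
  have hBmem : ∀ x, x ∈ B ↔ x ∈ Λ ∧ ‖x‖ ≤ R := by
    intro x
    rw [hB, Set.Finite.mem_toFinset, Set.mem_inter_iff, Metric.mem_closedBall, dist_zero_right,
      SetLike.mem_coe]
  set 𝒯 := (B.powersetCard j).filter
    (fun (t : Finset (EuclideanSpace ℝ (Fin N))) =>
      LinearIndependent ℝ (fun v : t => (v : EuclideanSpace ℝ (Fin N)))) with h𝒯def
  have h𝒯mem : ∀ t, t ∈ 𝒯 ↔ (t ⊆ B ∧ t.card = j) ∧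
      LinearIndependent ℝ (fun v : t => (v : EuclideanSpace ℝ (Fin N))) := by
    intro t; rw [h𝒯def, Finset.mem_filter, Finset.mem_powersetCard]
  obtain ⟨t0j, ht0jsub, ht0jcard⟩ := t0.exists_subset_card_eq (le_of_le_of_eq hjN ht0card.symm)
  have ht0jli : LinearIndependent ℝ (fun v : t0j => (v : EuclideanSpace ℝ (Fin N))) :=
    LinearIndepOn.mono (v := id) (s := ↑t0) ht0li (Finset.coe_subset.2 ht0jsub)
  have ht0jB : t0j ⊆ B := by
    intro x hx
    refine (hBmem x).2 ⟨ht0Λ (Finset.mem_coe.2 (ht0jsub hx)), ?_⟩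
    calc ‖x‖ ≤ gg W x (q₀ + 1) := le_max_left _ _
      _ ≤ R := (Finset.le_fold_max _).2 (Or.inr ⟨x, ht0jsub hx, le_rfl⟩)
  have ht0j𝒯 : t0j ∈ 𝒯 := (h𝒯mem t0j).2 ⟨⟨ht0jB, ht0jcard⟩, ht0jli⟩
  have h𝒯ne : 𝒯.Nonempty := ⟨t0j, ht0j𝒯⟩
  have hprops : ∀ t ∈ 𝒯, t.Nonempty ∧
      (↑t : Set (EuclideanSpace ℝ (Fin N))) ⊆ (Λ : Set (EuclideanSpace ℝ (Fin N))) ∧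
      (∀ x ∈ t, x ≠ 0) ∧ t.card = j ∧
      LinearIndependent ℝ (fun v : t => (v : EuclideanSpace ℝ (Fin N))) := by
    intro t ht
    obtain ⟨⟨htB, htcard⟩, htli⟩ := (h𝒯mem t).1 ht
    have hne : t.Nonempty := Finset.card_pos.1 (htcard ▸ hj1)
    have hΛ : (↑t : Set (EuclideanSpace ℝ (Fin N))) ⊆ (Λ : Set (EuclideanSpace ℝ (Fin N))) := by
      intro x hx
      exact SetLike.mem_coe.2 ((hBmem x).1 (htB (Finset.mem_coe.1 hx))).1
    refine ⟨hne, hΛ, fun x hx => ?_, htcard, htli⟩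
    exact htli.ne_zero ⟨x, hx⟩
  refine ⟨𝒯, h𝒯ne, hprops, ?_⟩
  intro q hq
  set G : Finset (EuclideanSpace ℝ (Fin N)) → ℝ := fun t => t.fold max 0 (fun x => gg W x q)
    with hG
  set μ := 𝒯.inf' h𝒯ne G with hμ
  have hGel : ∀ (t : Finset (EuclideanSpace ℝ (Fin N))), ∀ x ∈ t, gg W x q ≤ G t :=
    fun t x hx => (Finset.le_fold_max _).2 (Or.inr ⟨x, hx, le_rfl⟩)
  have hGpos : ∀ t ∈ 𝒯, 0 < G t := by
    intro t ht
    obtain ⟨⟨x, hx⟩, -, hnz, -, -⟩ := hprops t ht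
    exact lt_of_lt_of_le (gg_pos W (hnz x hx) q) (hGel t x hx)
  obtain ⟨t1, ht1, ht1eq⟩ := 𝒯.exists_mem_eq_inf' h𝒯ne G
  obtain ⟨ht1ne, ht1Λ, ht1nz, ht1card, ht1li⟩ := hprops t1 ht1
  have hμpos : 0 < μ := by rw [hμ, ht1eq]; exact hGpos t1 ht1
  have hμmem : μ ∈ {r : ℝ | 0 < r ∧ ∃ t : Finset (EuclideanSpace ℝ (Fin N)),
      ↑t ⊆ (Λ : Set (EuclideanSpace ℝ (Fin N))) ∩ (r • {y : EuclideanSpace ℝ (Fin N) | ‖y‖ ≤ 1 ∧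
        ‖(Submodule.orthogonalProjectionOnto W y : EuclideanSpace ℝ (Fin N))‖ ≤ (Real.exp q)⁻¹}) ∧
      j ≤ t.card ∧ LinearIndependent ℝ (fun v : t => (v : EuclideanSpace ℝ (Fin N)))} := by
    refine ⟨hμpos, t1, ?_, ht1card.ge, ht1li⟩
    intro x hx
    refine ⟨ht1Λ hx, (mem_smul_C W hμpos x).2 ?_⟩
    rw [hμ, ht1eq]
    exact hGel t1 x (Finset.mem_coe.1 hx)
  have hlb : ∀ r ∈ {r : ℝ | 0 < r ∧ ∃ t : Finset (EuclideanSpace ℝ (Fin N)),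
      ↑t ⊆ (Λ : Set (EuclideanSpace ℝ (Fin N))) ∩ (r • {y : EuclideanSpace ℝ (Fin N) | ‖y‖ ≤ 1 ∧
        ‖(Submodule.orthogonalProjectionOnto W y : EuclideanSpace ℝ (Fin N))‖ ≤ (Real.exp q)⁻¹}) ∧
      j ≤ t.card ∧ LinearIndependent ℝ (fun v : t => (v : EuclideanSpace ℝ (Fin N)))},
      μ ≤ r := by
    rintro r ⟨hr, t, htsub, htcard, htli⟩
    have hσR : G t0j ≤ R := by
      rw [hG]
      rw [Finset.fold_max_le]
      refine ⟨hR0, fun x hx => ?_⟩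
      refine le_trans (gg_mono W x (by linarith [hq.2] : q ≤ q₀ + 1)) ?_
      exact (Finset.le_fold_max _).2 (Or.inr ⟨x, ht0jsub hx, le_rfl⟩)
    rcases le_or_gt (G t0j) r with hcase | hcase
    · exact le_trans (Finset.inf'_le G ht0j𝒯) hcase
    · have htB : t ⊆ B := by
        intro x hx
        obtain ⟨hxΛ, hxC⟩ := htsub (Finset.mem_coe.2 hx)
        refine (hBmem x).2 ⟨SetLike.mem_coe.1 hxΛ, ?_⟩
        have hgr := (mem_smul_C W hr x).1 hxC
        calc ‖x‖ ≤ gg W x q := le_max_left _ _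
          _ ≤ r := hgr
          _ ≤ R := le_of_lt (lt_of_lt_of_le hcase hσR)
      obtain ⟨t', ht'sub, ht'card⟩ := t.exists_subset_card_eq htcard
      have ht'li : LinearIndependent ℝ (fun v : t' => (v : EuclideanSpace ℝ (Fin N))) :=
        LinearIndepOn.mono (v := id) (s := ↑t) htli (Finset.coe_subset.2 ht'sub)
      have ht'𝒯 : t' ∈ 𝒯 := (h𝒯mem t').2 ⟨⟨ht'sub.trans htB, ht'card⟩, ht'li⟩
      refine le_trans (Finset.inf'_le G ht'𝒯) ?_
      rw [hG]
      rw [Finset.fold_max_le]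
      refine ⟨le_of_lt hr, fun x hx => ?_⟩
      exact (mem_smul_C W hr x).1 (htsub (Finset.mem_coe.2 (ht'sub hx))).2
  rw [minkMin]
  exact le_antisymm (csInf_le ⟨0, fun r hr => le_of_lt hr.1⟩ hμmem) (le_csInf ⟨μ, hμmem⟩ hlb)

end Stmt2Aux
/-- With `C(Q) = {x : ‖x‖ ≤ 1, ‖proj_W x‖ ≤ Q⁻¹}` and
`L_j(q) = log λⱼ(C(e^q))` (successive minima with respect to a lattice `Λ` of
covolume `1`), each `L_j` is continuous and piecewise linear with slopes `0`
and `1` on `[0,∞)`, and at each `q > 0` where `L₁` changes slope from `1` to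
`0` one has `L₁(q) = L₂(q)`. -/
theorem stmt2 (N : ℕ) (hN : 1 ≤ N)
    (Λ : Submodule ℤ (EuclideanSpace ℝ (Fin N))) [DiscreteTopology Λ]
    [IsZLattice ℝ Λ] (hcov : ZLattice.covolume Λ = 1)
    (W : Submodule ℝ (EuclideanSpace ℝ (Fin N))) (hW : W ≠ ⊥)
    (C : ℝ → Set (EuclideanSpace ℝ (Fin N)))
    (hC : ∀ Q : ℝ, C Q = {x | ‖x‖ ≤ 1 ∧ ‖(Submodule.orthogonalProjectionOnto W x : EuclideanSpace ℝ (Fin N))‖ ≤ Q⁻¹})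
    (L : ℕ → ℝ → ℝ)
    (hL : ∀ j q, L j q = Real.log (minkMin (Λ : Set (EuclideanSpace ℝ (Fin N))) (C (Real.exp q)) j)) :
    (∀ j, 1 ≤ j → j ≤ N → ContinuousOn (L j) (Set.Ici 0) ∧ Slope01 (L j) 0) ∧
    (∀ q : ℝ, 0 < q → ChangesSlope (L 1) q → L 1 q = L 2 q) := by
  classical
  -- one-sided derivative data at every point, for every 1 ≤ j ≤ N
  have key : ∀ (j : ℕ), 1 ≤ j → j ≤ N → ∀ q₀ : ℝ,
      (∃ c ∈ ({0, 1} : Set ℝ), HasDerivWithinAt (L j) c (Set.Ici q₀) q₀) ∧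
      (∃ c ∈ ({0, 1} : Set ℝ), HasDerivWithinAt (L j) c (Set.Iic q₀) q₀) := by
    intro j hj1 hjN q₀
    obtain ⟨𝒯, h𝒯, hprops, hrepr⟩ := Stmt2Aux.rep W Λ j hj1 hjN q₀
    set F : Finset (EuclideanSpace ℝ (Fin N)) → ℝ → ℝ :=
      fun t s => Real.log (t.fold max 0 (fun x => Stmt2Aux.gg W x s)) with hF
    have hFelem : ∀ t ∈ 𝒯, Stmt2Aux.Elem (F t) := by
      intro t ht
      obtain ⟨hne, -, hnz, -, -⟩ := hprops t ht
      exact (Stmt2Aux.elem_log_fold W t hne hnz).2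
    have hLF : ∀ s ∈ Set.Icc (q₀ - 1) (q₀ + 1), L j s = 𝒯.inf' h𝒯 (fun t => F t s) := by
      intro s hs
      rw [hL j s, hC (Real.exp s), hrepr s hs]
      refine Stmt2Aux.log_inf' 𝒯 h𝒯 _ ?_
      intro t ht
      obtain ⟨hne, -, hnz, -, -⟩ := hprops t ht
      exact (Stmt2Aux.elem_log_fold W t hne hnz).1 s
    have hq₀I : q₀ ∈ Set.Icc (q₀ - 1) (q₀ + 1) := ⟨by linarith, by linarith⟩
    constructor
    · obtain ⟨c, hc, ε, hε, hlin, -⟩ := Stmt2Aux.min_local_right 𝒯 h𝒯 F hFelem q₀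
      refine ⟨c, hc, Stmt2Aux.hdwa_right (lt_min hε one_pos) ?_⟩
      intro s hs
      have hs1 : s ∈ Set.Icc q₀ (q₀ + ε) :=
        ⟨hs.1, hs.2.trans (by linarith [min_le_left ε (1:ℝ)])⟩
      have hs2 : s ∈ Set.Icc (q₀ - 1) (q₀ + 1) :=
        ⟨by linarith [hs.1], hs.2.trans (by linarith [min_le_right ε (1:ℝ)])⟩
      rw [hLF s hs2, hLF q₀ hq₀I, hlin s hs1]
    · obtain ⟨c, hc, ε, hε, hlin, -⟩ := Stmt2Aux.min_local_left 𝒯 h𝒯 F hFelem q₀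
      refine ⟨c, hc, Stmt2Aux.hdwa_left (lt_min hε one_pos) ?_⟩
      intro s hs
      have hs1 : s ∈ Set.Icc (q₀ - ε) q₀ :=
        ⟨le_trans (by linarith [min_le_left ε (1:ℝ)]) hs.1, hs.2⟩
      have hs2 : s ∈ Set.Icc (q₀ - 1) (q₀ + 1) :=
        ⟨le_trans (by linarith [min_le_right ε (1:ℝ)]) hs.1, by linarith [hs.2]⟩
      rw [hLF s hs2, hLF q₀ hq₀I, hlin s hs1]
  constructor
  · intro j hj1 hjN
    constructor
    · intro q _
      obtain ⟨⟨cr, -, hr⟩, ⟨cl, -, hl⟩⟩ := key j hj1 hjN q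
      have h1 : ContinuousWithinAt (L j) (Set.Ici q ∪ Set.Iic q) q :=
        hr.continuousWithinAt.union hl.continuousWithinAt
      refine h1.mono ?_
      intro s _
      exact (le_total q s).elim (fun h => Or.inl h) (fun h => Or.inr h)
    · constructor
      · intro q _
        obtain ⟨⟨c, hc, hdr⟩, -⟩ := key j hj1 hjN q
        rcases (by simpa using hc : c = 0 ∨ c = 1) with rfl | rfl
        · exact Or.inl hdr
        · exact Or.inr hdr
      · intro q _
        obtain ⟨-, ⟨c, hc, hdl⟩⟩ := key j hj1 hjN q
        rcases (by simpa using hc : c = 0 ∨ c = 1) with rfl | rfl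
        · exact Or.inl hdl
        · exact Or.inr hdl
  · rintro q hq ⟨hd1, hd0⟩
    obtain ⟨𝒯, h𝒯, hprops, hrepr⟩ := Stmt2Aux.rep W Λ 1 le_rfl hN q
    set F : Finset (EuclideanSpace ℝ (Fin N)) → ℝ → ℝ :=
      fun t s => Real.log (t.fold max 0 (fun x => Stmt2Aux.gg W x s)) with hF
    have hFelem : ∀ t ∈ 𝒯, Stmt2Aux.Elem (F t) := by
      intro t ht
      obtain ⟨hne, -, hnz, -, -⟩ := hprops t ht
      exact (Stmt2Aux.elem_log_fold W t hne hnz).2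
    have hLF : ∀ s ∈ Set.Icc (q - 1) (q + 1), L 1 s = 𝒯.inf' h𝒯 (fun t => F t s) := by
      intro s hs
      rw [hL 1 s, hC (Real.exp s), hrepr s hs]
      refine Stmt2Aux.log_inf' 𝒯 h𝒯 _ ?_
      intro t ht
      obtain ⟨hne, -, hnz, -, -⟩ := hprops t ht
      exact (Stmt2Aux.elem_log_fold W t hne hnz).1 s
    have hqI : q ∈ Set.Icc (q - 1) (q + 1) := ⟨by linarith, by linarith⟩
    -- left slope is 1; extract an active vector with the exponential branch
    obtain ⟨cl, hclmem, εl, hεl, hlinl, tx, htx𝒯, htxact, htxlin⟩ :=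
      Stmt2Aux.min_local_left 𝒯 h𝒯 F hFelem q
    have hLleft : HasDerivWithinAt (L 1) cl (Set.Iic q) q := by
      refine Stmt2Aux.hdwa_left (lt_min hεl one_pos) ?_
      intro s hs
      have hs1 : s ∈ Set.Icc (q - εl) q :=
        ⟨le_trans (by linarith [min_le_left εl (1:ℝ)]) hs.1, hs.2⟩
      have hs2 : s ∈ Set.Icc (q - 1) (q + 1) :=
        ⟨le_trans (by linarith [min_le_right εl (1:ℝ)]) hs.1, by linarith [hs.2]⟩
      rw [hLF s hs2, hLF q hqI, hlinl s hs1]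
    have hcl1 : cl = 1 := by
      have e1 := hLleft.derivWithin ((uniqueDiffOn_Iic q) q Set.self_mem_Iic)
      have e2 := hd1.derivWithin ((uniqueDiffOn_Iic q) q Set.self_mem_Iic)
      rw [e1] at e2
      exact e2
    -- right slope is 0; extract an active vector with the norm branch
    obtain ⟨cr, hcrmem, εr, hεr, hlinr, ty, hty𝒯, htyact, htylin⟩ :=
      Stmt2Aux.min_local_right 𝒯 h𝒯 F hFelem q
    have hLright : HasDerivWithinAt (L 1) cr (Set.Ici q) q := by
      refine Stmt2Aux.hdwa_right (lt_min hεr one_pos) ?_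
      intro s hs
      have hs1 : s ∈ Set.Icc q (q + εr) :=
        ⟨hs.1, hs.2.trans (by linarith [min_le_left εr (1:ℝ)])⟩
      have hs2 : s ∈ Set.Icc (q - 1) (q + 1) :=
        ⟨by linarith [hs.1], hs.2.trans (by linarith [min_le_right εr (1:ℝ)])⟩
      rw [hLF s hs2, hLF q hqI, hlinr s hs1]
    have hcr0 : cr = 0 := by
      have e1 := hLright.derivWithin ((uniqueDiffOn_Ici q) q Set.self_mem_Ici)
      have e2 := hd0.derivWithin ((uniqueDiffOn_Ici q) q Set.self_mem_Ici)
      rw [e1] at e2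
      exact e2
    -- the active sets are singletons
    obtain ⟨-, htxΛ, htxnz, htxcard, -⟩ := hprops tx htx𝒯
    obtain ⟨x, rfl⟩ := Finset.card_eq_one.1 htxcard
    obtain ⟨-, htyΛ, htynz, htycard, -⟩ := hprops ty hty𝒯
    obtain ⟨y, rfl⟩ := Finset.card_eq_one.1 htycard
    have hx0 : x ≠ 0 := htxnz x (Finset.mem_singleton_self x)
    have hy0 : y ≠ 0 := htynz y (Finset.mem_singleton_self y)
    have hFsing : ∀ (z : EuclideanSpace ℝ (Fin N)) (s : ℝ),
        F {z} s = Real.log (Stmt2Aux.gg W z s) := by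
      intro z s
      rw [hF]
      dsimp only
      rw [Finset.fold_singleton, max_eq_left (Stmt2Aux.gg_nonneg W z s)]
    -- structural inequalities
    have hx1 : ‖x‖ < Real.exp q *
        ‖(Submodule.orthogonalProjectionOnto W x : EuclideanSpace ℝ (Fin N))‖ := by
      refine Stmt2Aux.slope_one_left W hεl ?_
      intro s hs
      have := htxlin s hs
      rwa [hFsing x s, hFsing x q, hcl1] at this
    have hy1 : Real.exp q *
        ‖(Submodule.orthogonalProjectionOnto W y : EuclideanSpace ℝ (Fin N))‖ < ‖y‖ := by
      refine Stmt2Aux.slope_zero_right W hy0 hεr ?_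
      intro s hs
      have := htylin s hs
      rwa [hFsing y s, hFsing y q, hcr0] at this
    -- both are active at the common value L 1 q
    have hxact : Real.log (Stmt2Aux.gg W x q) = L 1 q := by
      rw [← hFsing x q, htxact, ← hLF q hqI]
    have hyact : Real.log (Stmt2Aux.gg W y q) = L 1 q := by
      rw [← hFsing y q, htyact, ← hLF q hqI]
    set lam1 := minkMin (Λ : Set (EuclideanSpace ℝ (Fin N))) (C (Real.exp q)) 1 with hlam1
    have hlam1pos : 0 < lam1 := by
      rw [hlam1, hC (Real.exp q), hrepr q hqI]
      obtain ⟨t1, ht1, ht1eq⟩ :=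
        𝒯.exists_mem_eq_inf' h𝒯 (fun t => t.fold max 0 (fun x => Stmt2Aux.gg W x q))
      rw [ht1eq]
      obtain ⟨hne, -, hnz, -, -⟩ := hprops t1 ht1
      exact (Stmt2Aux.elem_log_fold W t1 hne hnz).1 q
    have hggx : Stmt2Aux.gg W x q = lam1 := by
      have h1 : Real.exp (Real.log (Stmt2Aux.gg W x q)) = Stmt2Aux.gg W x q :=
        Real.exp_log (Stmt2Aux.gg_pos W hx0 q)
      have h2 : Real.exp (Real.log lam1) = lam1 := Real.exp_log hlam1pos
      rw [← h1, hxact, hL 1 q, ← hlam1, h2]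
    have hggy : Stmt2Aux.gg W y q = lam1 := by
      have h1 : Real.exp (Real.log (Stmt2Aux.gg W y q)) = Stmt2Aux.gg W y q :=
        Real.exp_log (Stmt2Aux.gg_pos W hy0 q)
      have h2 : Real.exp (Real.log lam1) = lam1 := Real.exp_log hlam1pos
      rw [← h1, hyact, hL 1 q, ← hlam1, h2]
    -- x and y are not proportional
    have hxy : x ≠ y := by
      intro h
      rw [h] at hx1
      linarith
    have hspan : x ∉ Submodule.span ℝ ({y} : Set (EuclideanSpace ℝ (Fin N))) := by
      intro hmem
      obtain ⟨a, ha⟩ := Submodule.mem_span_singleton.1 hmem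
      have ha0 : a ≠ 0 := by
        rintro rfl
        rw [zero_smul] at ha
        exact hx0 ha.symm
      have hproj : (↑(Submodule.orthogonalProjectionOnto W (a • y)) : EuclideanSpace ℝ (Fin N))
          = a • (Submodule.orthogonalProjectionOnto W y : EuclideanSpace ℝ (Fin N)) := by
        rw [map_smul]; rfl
      have hnx : ‖x‖ = |a| * ‖y‖ := by rw [← ha, norm_smul, Real.norm_eq_abs]
      have hpx : ‖(Submodule.orthogonalProjectionOnto W x : EuclideanSpace ℝ (Fin N))‖
          = |a| * ‖(Submodule.orthogonalProjectionOnto W y : EuclideanSpace ℝ (Fin N))‖ := by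
        rw [← ha, hproj, norm_smul, Real.norm_eq_abs]
      rw [hnx, hpx] at hx1
      have hapos : 0 < |a| := abs_pos.2 ha0
      nlinarith
    -- the pair {x, y} is linearly independent
    set S : Set (EuclideanSpace ℝ (Fin N)) := insert x ({y} : Set (EuclideanSpace ℝ (Fin N)))
      with hS
    have hli_set : LinearIndependent ℝ ((↑) : S → EuclideanSpace ℝ (Fin N)) := by
      rw [hS]
      exact (linearIndepOn_id_insert (by simpa using hxy)).2 ⟨LinearIndepOn.singleton (v := id) hy0, hspan⟩
    have hTcoe : (↑({x, y} : Finset (EuclideanSpace ℝ (Fin N))) : Set (EuclideanSpace ℝ (Fin N)))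
        = S := by rw [hS]; simp
    have hTli : LinearIndependent ℝ
        (fun v : ({x, y} : Finset (EuclideanSpace ℝ (Fin N))) =>
          (v : EuclideanSpace ℝ (Fin N))) := by
      have h := hli_set
      rw [← hTcoe] at h
      exact h
    have hTcard : ({x, y} : Finset (EuclideanSpace ℝ (Fin N))).card = 2 := by
      rw [Finset.card_insert_of_notMem (by simpa using hxy), Finset.card_singleton]
    -- lam1 belongs to the defining set of the second minimum
    have hmem2 : lam1 ∈ {r : ℝ | 0 < r ∧ ∃ t : Finset (EuclideanSpace ℝ (Fin N)),
        ↑t ⊆ (Λ : Set (EuclideanSpace ℝ (Fin N))) ∩ (r • C (Real.exp q)) ∧ 2 ≤ t.card ∧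
        LinearIndependent ℝ (fun v : t => (v : EuclideanSpace ℝ (Fin N)))} := by
      refine ⟨hlam1pos, {x, y}, ?_, hTcard.ge, hTli⟩
      intro z hz
      rw [Finset.coe_insert, Finset.coe_singleton] at hz
      rcases hz with rfl | rfl
      · refine ⟨htxΛ (by simp), ?_⟩
        rw [hC (Real.exp q)]
        exact (Stmt2Aux.mem_smul_C W hlam1pos z).2 (le_of_eq hggx)
      · refine ⟨htyΛ (by simp), ?_⟩
        rw [hC (Real.exp q)]
        exact (Stmt2Aux.mem_smul_C W hlam1pos z).2 (le_of_eq hggy)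
    set lam2 := minkMin (Λ : Set (EuclideanSpace ℝ (Fin N))) (C (Real.exp q)) 2 with hlam2
    have hle21 : lam2 ≤ lam1 := by
      rw [hlam2, minkMin]
      exact csInf_le ⟨0, fun r hr => le_of_lt hr.1⟩ hmem2
    have hle12 : lam1 ≤ lam2 := by
      rw [hlam1, hlam2, minkMin, minkMin]
      refine csInf_le_csInf ⟨0, fun r hr => le_of_lt hr.1⟩ ⟨lam1, hmem2⟩ ?_
      rintro r ⟨hr, t, hsub, hcard, hli⟩
      exact ⟨hr, t, hsub, le_trans (by norm_num) hcard, hli⟩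
    rw [hL 1 q, hL 2 q, ← hlam1, ← hlam2, le_antisymm hle21 hle12]
end
end

section
/- Let u be a unit vector in ℝ^n, let k ∈ {1,…,n}, and let Q ≥ 1. If x_1, …, x_k ∈ ℝ^n satisfy ‖x_i‖ ≤ 1 and |x_i·u| ≤ Q⁻¹ for each i, then the exterior product ω = x_1 ∧ ⋯ ∧ x_k satisfies ‖ω‖ ≤ k and ‖proj_{W^{(k)}}(ω)‖ ≤ k Q⁻¹, where W^{(k)} = (⋀^{k−1} U) ∧ ⟨u⟩_ℝ and U = u^⊥. -/
open scoped RealInnerProductSpace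

noncomputable section

/-- The `k`-th exterior power `⋀ᵏ ℝⁿ` with its Euclidean structure, realized
concretely via Plücker coordinates indexed by the `k`-element subsets of
`{0,…,n−1}` (the wedges of an orthonormal basis form an orthonormal basis). -/
abbrev ExtVec (n k : ℕ) := EuclideanSpace ℝ {s : Finset (Fin n) // s.card = k}

/-- The wedge product `x₁ ∧ ⋯ ∧ x_k` in Plücker coordinates. -/
def wedge {n k : ℕ} (x : Fin k → EuclideanSpace ℝ (Fin n)) : ExtVec n k :=
  WithLp.toLp 2 fun (s : {s : Finset (Fin n) // s.card = k}) =>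
    Matrix.det (Matrix.of fun (i j : Fin k) => x i (s.1.orderIsoOfFin s.2 j).1)

namespace Scratch

variable {n k : ℕ}
abbrev E (n : ℕ) := EuclideanSpace ℝ (Fin n)
def colMap (s : {s : Finset (Fin n) // s.card = k}) (j : Fin k) : Fin n :=
  (s.1.orderIsoOfFin s.2 j).1
lemma colMap_injective (s : {s : Finset (Fin n) // s.card = k}) :
    Function.Injective (colMap s) := fun a b h =>
  (s.1.orderIsoOfFin s.2).injective (Subtype.ext h)
lemma colMap_mem (s : {s : Finset (Fin n) // s.card = k}) (j : Fin k) :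
    colMap s j ∈ s.1 := (s.1.orderIsoOfFin s.2 j).2
lemma image_colMap (s : {s : Finset (Fin n) // s.card = k}) :
    Finset.univ.image (colMap s) = s.1 := by
  ext a
  simp only [Finset.mem_image, Finset.mem_univ, true_and]
  constructor
  · rintro ⟨j, rfl⟩; exact colMap_mem s j
  · intro ha
    exact ⟨(s.1.orderIsoOfFin s.2).symm ⟨a, ha⟩, by simp [colMap]⟩

def coordL (s : {s : Finset (Fin n) // s.card = k}) : E n →ₗ[ℝ] (Fin k → ℝ) where
  toFun v := fun j => v (colMap s j)
  map_add' _ _ := rfl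
  map_smul' _ _ := rfl

def wedgeCoord (s : {s : Finset (Fin n) // s.card = k}) : (E n) [⋀^Fin k]→ₗ[ℝ] ℝ :=
  (Matrix.detRowAlternating : (Fin k → ℝ) [⋀^Fin k]→ₗ[ℝ] ℝ).compLinearMap (coordL s)

def wedgeA (n k : ℕ) : (E n) [⋀^Fin k]→ₗ[ℝ] ExtVec n k where
  toFun := wedge
  map_update_add' v i a b := PiLp.ext fun s => (wedgeCoord s).map_update_add v i a b
  map_update_smul' v i c a := PiLp.ext fun s => (wedgeCoord s).map_update_smul v i c a
  map_eq_zero_of_eq' v i j h hij := PiLp.ext fun s => (wedgeCoord s).map_eq_zero_of_eq v h hij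

lemma wedgeA_apply (x : Fin k → E n) : wedgeA n k x = wedge x := rfl

/-- Cauchy–Binet. -/
theorem cauchy_binet (X Y : Fin k → Fin n → ℝ) :
    Matrix.det (Matrix.of fun i j => ∑ t, X i t * Y j t)
      = ∑ s : {s : Finset (Fin n) // s.card = k},
          Matrix.det (Matrix.of fun i j => X i (colMap s j)) *
          Matrix.det (Matrix.of fun i j => Y i (colMap s j)) := by
  classical
  set f := (Matrix.detRowAlternating : (Fin k → ℝ) [⋀^Fin k]→ₗ[ℝ] ℝ) with hf
  set r : Fin n → (Fin k → ℝ) := fun t j => Y j t with hr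
  set F : (Fin k → Fin n) → ℝ := fun d => (∏ i, X i (d i)) * f (fun i => r (d i)) with hF
  -- Step 1: LHS = sum over all functions d
  have step1 : Matrix.det (Matrix.of fun i j => ∑ t, X i t * Y j t) = ∑ d : Fin k → Fin n, F d := by
    have h0 : (Matrix.of fun i j => ∑ t, X i t * Y j t)
        = fun i => ∑ t, X i t • r t := by
      funext i j
      simp [r, Finset.sum_apply]
    show Matrix.detRowAlternating _ = _
    rw [h0]
    rw [show Matrix.detRowAlternating (fun i => ∑ t, X i t • r t)
        = f.toMultilinearMap (fun i => ∑ t, X i t • r t) from rfl]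
    rw [f.toMultilinearMap.map_sum (g := fun i t => X i t • r t)]
    refine Finset.sum_congr rfl fun d _ => ?_
    rw [f.toMultilinearMap.map_smul_univ]
    simp [F, smul_eq_mul]
  -- Step 2: terms with non-injective d vanish
  have step2 : ∀ d : Fin k → Fin n, ¬ Function.Injective d → F d = 0 := by
    intro d hd
    simp only [Function.Injective, not_forall] at hd
    obtain ⟨i, j, hij, hne⟩ := hd
    have : f (fun i => r (d i)) = 0 :=
      f.map_eq_zero_of_eq _ (by rw [hij]) hne
    simp [F, this]
  -- Step 3: restrict to injective maps
  have step3 : (∑ d : Fin k → Fin n, F d)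
      = ∑ d ∈ Finset.univ.filter (fun d => Function.Injective d), F d := by
    refine (Finset.sum_subset (Finset.filter_subset _ _) ?_).symm
    intro d _ hd
    simp only [Finset.mem_filter, Finset.mem_univ, true_and] at hd
    exact step2 d hd
  -- the parametrization map
  set Φ : ({s : Finset (Fin n) // s.card = k} × Equiv.Perm (Fin k)) → (Fin k → Fin n) :=
    fun p i => colMap p.1 (p.2 i) with hΦ
  have image_phi : ∀ (s : {s : Finset (Fin n) // s.card = k}) (σ : Equiv.Perm (Fin k)),
      Finset.univ.image (fun i => colMap s (σ i)) = s.1 := by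
    intro s σ
    ext a
    simp only [Finset.mem_image, Finset.mem_univ, true_and]
    constructor
    · rintro ⟨i, rfl⟩; exact colMap_mem s _
    · intro ha
      exact ⟨σ.symm ((s.1.orderIsoOfFin s.2).symm ⟨a, ha⟩), by simp [colMap]⟩
  have Φ_inj : ∀ p ∈ (Finset.univ : Finset _), ∀ q ∈ (Finset.univ : Finset _), Φ p = Φ q → p = q := by
    rintro ⟨s, σ⟩ - ⟨s', σ'⟩ - h
    have him : s = s' := by
      apply Subtype.ext
      rw [← image_phi s σ, ← image_phi s' σ']
      exact Finset.image_congr (fun i _ => congrFun h i)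
    subst him
    have hσ : σ = σ' := by
      exact Equiv.ext fun i => colMap_injective s (congrFun h i)
    rw [hσ]
  have Φ_image : Finset.univ.image Φ = Finset.univ.filter (fun d => Function.Injective d) := by
    ext d
    simp only [Finset.mem_image, Finset.mem_univ, true_and, Finset.mem_filter]
    constructor
    · rintro ⟨⟨s, σ⟩, rfl⟩
      exact (colMap_injective s).comp σ.injective
    · intro hd
      have hcard : (Finset.univ.image d).card = k := by
        rw [Finset.card_image_of_injective _ hd, Finset.card_univ, Fintype.card_fin]
      set s : {s : Finset (Fin n) // s.card = k} := ⟨Finset.univ.image d, hcard⟩ with hs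
      have hmem : ∀ i, d i ∈ s.1 := fun i => Finset.mem_image_of_mem d (Finset.mem_univ i)
      set σ₀ : Fin k → Fin k := fun i => (s.1.orderIsoOfFin s.2).symm ⟨d i, hmem i⟩ with hσ₀
      have hσ₀inj : Function.Injective σ₀ := by
        intro a b hab
        apply hd
        have h1 : ((s.1.orderIsoOfFin s.2) (σ₀ a) : Fin n) = d a := by simp [σ₀]
        have h2 : ((s.1.orderIsoOfFin s.2) (σ₀ b) : Fin n) = d b := by simp [σ₀]
        rw [← h1, ← h2, hab]
      refine ⟨⟨s, Equiv.ofBijective σ₀ (Finite.injective_iff_bijective.mp hσ₀inj)⟩, ?_⟩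
      funext i
      show colMap s (σ₀ i) = d i
      simp [colMap, σ₀]
  -- put it together
  rw [step1, step3, ← Φ_image, Finset.sum_image Φ_inj, Fintype.sum_prod_type]
  refine Finset.sum_congr rfl fun s _ => ?_
  -- now fixed s: sum over permutations
  have hdetX : Matrix.det (Matrix.of fun i j => X i (colMap s j))
      = ∑ σ : Equiv.Perm (Fin k), (Equiv.Perm.sign σ : ℤ) • ∏ i, X i (colMap s (σ i)) := by
    rw [← Matrix.det_transpose, Matrix.det_apply]
    rfl
  have hdetY : f (fun i => r (colMap s i)) = Matrix.det (Matrix.of fun i j => Y i (colMap s j)) := by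
    rw [← Matrix.det_transpose]
    rfl
  rw [hdetX, Finset.sum_mul]
  refine Finset.sum_congr rfl fun σ _ => ?_
  show F (Φ (s, σ)) = _
  have hperm : f (fun i => r (colMap s (σ i))) = Equiv.Perm.sign σ • f (fun i => r (colMap s i)) :=
    f.map_perm (fun i => r (colMap s i)) σ
  simp only [F, Φ, hperm, hdetY]
  simp only [Units.smul_def, zsmul_eq_mul]
  push_cast
  ring


theorem inner_wedge (x y : Fin k → E n) :
    ⟪wedge x, wedge y⟫ = Matrix.det (Matrix.of fun i j => ⟪x i, y j⟫) := by
  have h1 : (Matrix.of fun i j => (⟪x i, y j⟫ : ℝ)) = Matrix.of fun i j => ∑ t, x i t * y j t := by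
    funext i j
    simp [PiLp.inner_apply, RCLike.inner_apply]
    exact Finset.sum_congr rfl fun _ _ => mul_comm _ _
  rw [h1, cauchy_binet]
  simp only [PiLp.inner_apply, RCLike.inner_apply, conj_trivial]
  exact Finset.sum_congr rfl fun _ _ => mul_comm _ _

lemma norm_wedge_sq (x : Fin k → E n) :
    ‖wedge x‖ ^ 2 = Matrix.det (Matrix.of fun i j => ⟪x i, x j⟫) := by
  rw [← real_inner_self_eq_norm_sq, inner_wedge]

theorem norm_wedge_le : ∀ {k : ℕ} (z : Fin k → E n), ‖wedge z‖ ≤ ∏ i, ‖z i‖ := by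
  intro k
  induction k with
  | zero =>
    intro z
    have h : ‖wedge z‖ ^ 2 = 1 := by
      rw [norm_wedge_sq]
      exact Matrix.det_fin_zero
    have h1 : ‖wedge z‖ = 1 := by nlinarith [norm_nonneg (wedge z)]
    simp [h1]
  | succ k ih =>
    intro z
    set v : Fin k → E n := Fin.init z with hv
    set w : E n := z (Fin.last k) with hw
    have hz : z = Fin.snoc v w := (Fin.snoc_init_self z).symm
    set K : Submodule ℝ (E n) := Submodule.span ℝ (Set.range v) with hK
    set p : E n := (K.orthogonalProjectionOnto w : E n) with hp
    have hpK : p ∈ K := (K.orthogonalProjectionOnto w).2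
    have hw' : w - p ∈ Kᗮ := K.sub_starProjection_mem_orthogonal w
    have hsnoc_upd : ∀ c : E n, (Fin.snoc v c : Fin (k+1) → E n) = Function.update (Fin.snoc v w : Fin (k+1) → E n) (Fin.last k) c := by
      intro c
      rw [Fin.update_snoc_last]
    have hmemzero : ∀ c ∈ K, wedgeA n (k+1) (Fin.snoc v c) = 0 := by
      intro c hc
      induction hc using Submodule.span_induction with
      | mem a ha =>
        obtain ⟨i, rfl⟩ := ha
        exact (wedgeA n (k+1)).map_eq_zero_of_eq _
          (by rw [Fin.snoc_castSucc, Fin.snoc_last])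
          (Fin.ne_of_lt (Fin.castSucc_lt_last i))
      | zero =>
        exact (wedgeA n (k+1)).map_coord_zero (Fin.last k) (by simp)
      | add a b _ _ ha hb =>
        rw [hsnoc_upd (a + b), (wedgeA n (k+1)).map_update_add,
          ← hsnoc_upd a, ← hsnoc_upd b, ha, hb, add_zero]
      | smul r a _ ha =>
        rw [hsnoc_upd (r • a), (wedgeA n (k+1)).map_update_smul,
          ← hsnoc_upd a, ha, smul_zero]
    have hwz : wedge z = wedge (Fin.snoc v (w - p)) := by
      have h1 : wedgeA n (k+1) (Fin.snoc v w)
          = wedgeA n (k+1) (Fin.snoc v (w - p)) + wedgeA n (k+1) (Fin.snoc v p) := by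
        rw [hsnoc_upd (w - p), hsnoc_upd p, ← (wedgeA n (k+1)).map_update_add,
          sub_add_cancel, ← hsnoc_upd w]
      have h2 := hmemzero p hpK
      rw [hz]
      show wedgeA n (k+1) (Fin.snoc v w) = wedgeA n (k+1) (Fin.snoc v (w - p))
      rw [h1, h2, add_zero]
    have hperp : ∀ i, ⟪v i, w - p⟫ = 0 := fun i =>
      hw' (v i) (Submodule.subset_span ⟨i, rfl⟩)
    have hG : ‖wedge (Fin.snoc v (w - p))‖ ^ 2 = ‖w - p‖ ^ 2 * ‖wedge v‖ ^ 2 := by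
      rw [norm_wedge_sq]
      set G : Matrix (Fin (k+1)) (Fin (k+1)) ℝ :=
        Matrix.of fun i j => ⟪(Fin.snoc v (w - p) : Fin (k+1) → E n) i,
          (Fin.snoc v (w - p) : Fin (k+1) → E n) j⟫ with hGdef
      rw [Matrix.det_succ_row G (Fin.last k), Finset.sum_eq_single (Fin.last k)]
      · have hGll : G (Fin.last k) (Fin.last k) = ‖w - p‖ ^ 2 := by
          show ⟪(Fin.snoc v (w - p) : Fin (k+1) → E n) (Fin.last k), _⟫ = _
          rw [Fin.snoc_last, real_inner_self_eq_norm_sq]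
        have hsub : G.submatrix (Fin.last k).succAbove (Fin.last k).succAbove
            = Matrix.of fun i j => ⟪v i, v j⟫ := by
          funext i j
          simp only [Matrix.submatrix_apply, Fin.succAbove_last]
          show ⟪(Fin.snoc v (w - p) : Fin (k+1) → E n) i.castSucc,
            (Fin.snoc v (w - p) : Fin (k+1) → E n) j.castSucc⟫ = _
          rw [Fin.snoc_castSucc, Fin.snoc_castSucc]
          rfl
        rw [hGll, hsub, ← norm_wedge_sq]
        have : (-1 : ℝ) ^ ((Fin.last k : ℕ) + (Fin.last k : ℕ)) = 1 :=
          Even.neg_one_pow ⟨k, by simp [Fin.val_last]⟩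
        rw [this]
        ring
      · intro j _ hj
        obtain ⟨j', rfl⟩ := Fin.exists_castSucc_eq.mpr hj
        have : G (Fin.last k) j'.castSucc = 0 := by
          show ⟪(Fin.snoc v (w - p) : Fin (k+1) → E n) (Fin.last k),
            (Fin.snoc v (w - p) : Fin (k+1) → E n) j'.castSucc⟫ = 0
          rw [Fin.snoc_last, Fin.snoc_castSucc, real_inner_comm]
          exact hperp j'
        rw [this]
        ring
      · simp
    have hnorm_eq : ‖wedge z‖ = ‖w - p‖ * ‖wedge v‖ := by
      rw [hwz]
      nlinarith [hG, norm_nonneg (wedge (Fin.snoc v (w - p))), norm_nonneg (w - p),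
        norm_nonneg (wedge v), mul_nonneg (norm_nonneg (w - p)) (norm_nonneg (wedge v))]
    have hwp_le : ‖w - p‖ ≤ ‖w‖ := by
      have horth : ⟪w - p, p⟫ = 0 := by
        rw [real_inner_comm]
        exact hw' p hpK
      have : ‖w‖ ^ 2 = ‖w - p‖ ^ 2 + ‖p‖ ^ 2 := by
        have h3 : ‖(w - p) + p‖ ^ 2 = ‖w - p‖ ^ 2 + 2 * ⟪w - p, p⟫ + ‖p‖ ^ 2 :=
          norm_add_sq_real _ _
        rw [sub_add_cancel] at h3
        rw [h3, horth]
        ring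
      nlinarith [norm_nonneg w, norm_nonneg (w - p), norm_nonneg p]
    calc ‖wedge z‖ = ‖w - p‖ * ‖wedge v‖ := hnorm_eq
      _ ≤ ‖w‖ * ∏ i, ‖v i‖ := by
          apply mul_le_mul hwp_le (ih v) (norm_nonneg _) (norm_nonneg _)
      _ = ∏ i, ‖z i‖ := by
          rw [Fin.prod_univ_castSucc]
          rw [mul_comm]
          congr 1

end Scratch

set_option maxHeartbeats 2000000

/-- The subspace `W⁽ᵏ⁾ = (⋀^{k−1} U) ∧ ⟨u⟩` of `⋀ᵏ ℝⁿ`, where `U = u^⊥`.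
Here `k = k' + 1`. -/
def Wk (n k' : ℕ) (u : EuclideanSpace ℝ (Fin n)) : Submodule ℝ (ExtVec n (k' + 1)) :=
  Submodule.span ℝ
    {ω | ∃ v : Fin k' → EuclideanSpace ℝ (Fin n),
      (∀ i, ⟪v i, u⟫ = 0) ∧ ω = wedge (Fin.snoc v u)}

/-- Let `u` be a unit vector of `ℝⁿ`, `1 ≤ k ≤ n`, `Q ≥ 1`.
If `x₁,…,x_k` satisfy `‖xᵢ‖ ≤ 1` and `|xᵢ·u| ≤ Q⁻¹`, then
`ω = x₁ ∧ ⋯ ∧ x_k` satisfies `‖ω‖ ≤ k` and `‖proj_{W⁽ᵏ⁾} ω‖ ≤ k Q⁻¹`.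
(Here `k = k' + 1`.) -/
theorem stmt3 (n k' : ℕ) (hk : k' + 1 ≤ n)
    (u : EuclideanSpace ℝ (Fin n)) (hu : ‖u‖ = 1)
    (Q : ℝ) (hQ : 1 ≤ Q)
    (x : Fin (k' + 1) → EuclideanSpace ℝ (Fin n))
    (hx : ∀ i, ‖x i‖ ≤ 1 ∧ |⟪x i, u⟫| ≤ Q⁻¹) :
    ‖wedge x‖ ≤ (k' + 1 : ℝ) ∧
    ‖(Submodule.orthogonalProjectionOnto (Wk n k' u) (wedge x) : ExtVec n (k' + 1))‖
      ≤ (k' + 1 : ℝ) * Q⁻¹ := by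
  classical
  set c : Fin (k' + 1) → ℝ := fun i => ⟪x i, u⟫ with hc
  set y : Fin (k' + 1) → EuclideanSpace ℝ (Fin n) := fun i => x i - c i • u with hy
  have huu : ⟪u, u⟫ = 1 := by rw [real_inner_self_eq_norm_sq, hu]; norm_num
  have hyu : ∀ i, ⟪y i, u⟫ = 0 := by
    intro i
    simp only [hy, inner_sub_left, real_inner_smul_left, huu, hc]
    ring
  have hyn : ∀ i, ‖y i‖ ≤ 1 := by
    intro i
    have hxi : x i = y i + c i • u := by simp [hy]
    have h2 : ⟪y i, c i • u⟫ = 0 := by rw [real_inner_smul_right, hyu i]; ring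
    have h1 : ‖x i‖ ^ 2 = ‖y i‖ ^ 2 + ‖c i • u‖ ^ 2 := by
      rw [hxi, norm_add_sq_real, h2]; ring
    nlinarith [(hx i).1, norm_nonneg (x i), norm_nonneg (y i), norm_nonneg (c i • u),
      sq_nonneg ‖c i • u‖]
  have prod_le : ∏ i, ‖x i‖ ≤ 1 :=
    Finset.prod_le_one (fun i _ => norm_nonneg _) (fun i _ => (hx i).1)
  have part1 : ‖wedge x‖ ≤ (k' + 1 : ℝ) := by
    have h := Scratch.norm_wedge_le x
    have hnn : (0:ℝ) ≤ (k' : ℝ) := Nat.cast_nonneg k'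
    linarith
  refine ⟨part1, ?_⟩
  set f := Scratch.wedgeA n (k' + 1) with hf
  have hxeq : x = (fun i => c i • u) + y := funext fun i => by
    show x i = c i • u + (x i - c i • u)
    abel
  have hexp : wedge x = wedge y + ∑ i, c i • f (Function.update y i u) := by
    have h0 : wedge x = f.toMultilinearMap ((fun i => c i • u) + y) := by
      rw [← hxeq]; rfl
    rw [h0, f.toMultilinearMap.map_add_univ]
    simp only [AlternatingMap.coe_multilinearMap]
    set F : Finset (Fin (k' + 1)) → ExtVec n (k' + 1) :=
      fun S => f (S.piecewise (fun i => c i • u) y) with hF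
    have hF2 : ∀ S, 1 < S.card → F S = 0 := by
      intro S hS
      obtain ⟨a, ha, b, hb, hab⟩ := Finset.one_lt_card.mp hS
      set m : Fin (k' + 1) → EuclideanSpace ℝ (Fin n) := S.piecewise (fun _ => u) y with hm
      have hpw : S.piecewise (fun i => c i • u) y = S.piecewise (fun i => c i • m i) m := by
        funext t
        by_cases ht : t ∈ S <;> simp [hm, Finset.piecewise, ht]
      have hz : f m = 0 :=
        f.map_eq_zero_of_eq m (by simp [hm, Finset.piecewise, ha, hb]) hab
      show f (S.piecewise (fun i => c i • u) y) = 0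
      rw [hpw]
      have hps := f.toMultilinearMap.map_piecewise_smul (fun i => c i) m S
      simp only [AlternatingMap.coe_multilinearMap] at hps
      rw [hps, hz, smul_zero]
    set T : Finset (Finset (Fin (k' + 1))) :=
      insert ∅ (Finset.univ.image fun i => ({i} : Finset (Fin (k' + 1)))) with hT
    have hsum : ∑ S : Finset (Fin (k' + 1)), F S = ∑ S ∈ T, F S := by
      refine (Finset.sum_subset (Finset.subset_univ T) ?_).symm
      intro S _ hST
      apply hF2
      by_contra hcard
      push_neg at hcard
      apply hST
      rcases Nat.le_one_iff_eq_zero_or_eq_one.mp hcard with h0 | h1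
      · rw [Finset.card_eq_zero] at h0
        simp [hT, h0]
      · obtain ⟨a, rfl⟩ := Finset.card_eq_one.mp h1
        simp [hT]
    rw [hsum, hT, Finset.sum_insert (by simp),
      Finset.sum_image (fun a _ b _ h => Finset.singleton_injective h)]
    have hempty : F ∅ = wedge y := by
      show f ((∅ : Finset (Fin (k' + 1))).piecewise (fun i => c i • u) y) = wedge y
      rw [Finset.piecewise_empty]
      rfl
    have hsing : ∀ i, F {i} = c i • f (Function.update y i u) := by
      intro i
      show f (({i} : Finset (Fin (k' + 1))).piecewise (fun j => c j • u) y) = _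
      rw [Finset.piecewise_singleton, f.map_update_smul]
    rw [hempty]
    exact congrArg _ (Finset.sum_congr rfl fun i _ => hsing i)
  have horth : wedge y ∈ (Wk n k' u)ᗮ := by
    rw [Submodule.mem_orthogonal]
    intro ω hω
    rw [Wk] at hω
    induction hω using Submodule.span_induction with
    | mem ω' hω' =>
      obtain ⟨v, hv, rfl⟩ := hω'
      rw [Scratch.inner_wedge]
      apply Matrix.det_eq_zero_of_row_eq_zero (Fin.last k')
      intro j
      show ⟪(Fin.snoc v u : Fin (k' + 1) → EuclideanSpace ℝ (Fin n)) (Fin.last k'), y j⟫ = 0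
      rw [Fin.snoc_last, real_inner_comm]
      exact hyu j
    | zero => simp
    | add a b _ _ ha hb => rw [inner_add_left, ha, hb, add_zero]
    | smul r a _ ha => rw [real_inner_smul_left, ha, mul_zero]
  have hproj0 : Submodule.orthogonalProjectionOnto (Wk n k' u) (wedge y) = 0 :=
    Submodule.orthogonalProjectionOnto_eq_zero_iff.mpr horth
  set δ : ExtVec n (k' + 1) := ∑ i, c i • f (Function.update y i u) with hδ
  have hprojeq : Submodule.orthogonalProjectionOnto (Wk n k' u) (wedge x)
      = Submodule.orthogonalProjectionOnto (Wk n k' u) δ := by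
    rw [hexp, map_add, hproj0, zero_add]
  have hQi : (0:ℝ) ≤ Q⁻¹ := inv_nonneg.mpr (by linarith)
  have hδnorm : ‖δ‖ ≤ (k' + 1 : ℝ) * Q⁻¹ := by
    calc ‖δ‖ ≤ ∑ i, ‖c i • f (Function.update y i u)‖ := norm_sum_le _ _
      _ ≤ ∑ _i : Fin (k' + 1), Q⁻¹ := by
          refine Finset.sum_le_sum fun i _ => ?_
          rw [norm_smul]
          have h1 : ‖f (Function.update y i u)‖ ≤ 1 := by
            show ‖wedge (Function.update y i u)‖ ≤ 1
            refine le_trans (Scratch.norm_wedge_le _)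
              (Finset.prod_le_one (fun j _ => norm_nonneg _) fun j _ => ?_)
            rcases eq_or_ne j i with rfl | hne
            · simp [hu]
            · rw [Function.update_of_ne hne]
              exact hyn j
          have h2 : ‖c i‖ ≤ Q⁻¹ := by rw [Real.norm_eq_abs]; exact (hx i).2
          nlinarith [norm_nonneg (f (Function.update y i u)), norm_nonneg (c i)]
      _ = (k' + 1 : ℝ) * Q⁻¹ := by
          rw [Finset.sum_const, Finset.card_univ, Fintype.card_fin, nsmul_eq_mul]
          push_cast
          ring
  calc ‖(Submodule.orthogonalProjectionOnto (Wk n k' u) (wedge x) : ExtVec n (k' + 1))‖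
      = ‖(Submodule.orthogonalProjectionOnto (Wk n k' u) δ : ExtVec n (k' + 1))‖ := by rw [hprojeq]
    _ ≤ ‖δ‖ := by
        have h := Submodule.orthogonalProjectionOnto_norm_le (K := Wk n k' u)
        calc ‖(Submodule.orthogonalProjectionOnto (Wk n k' u) δ : ExtVec n (k' + 1))‖
            = ‖Submodule.orthogonalProjectionOnto (Wk n k' u) δ‖ := rfl
          _ ≤ ‖(Submodule.orthogonalProjectionOnto (Wk n k' u) : ExtVec n (k' + 1) →L[ℝ] Wk n k' u)‖ * ‖δ‖ :=
              ContinuousLinearMap.le_opNorm _ _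
          _ ≤ 1 * ‖δ‖ := mul_le_mul_of_nonneg_right h (norm_nonneg δ)
          _ = ‖δ‖ := one_mul _
    _ ≤ (k' + 1 : ℝ) * Q⁻¹ := hδnorm
end
end

section
/- Let u be a unit vector in ℝ^n and let y_1, …, y_n be linearly independent elements of ℤ^n. Then for every q ≥ 0, log‖y_1 ∧ ⋯ ∧ y_n‖ ≤ L(y_1,q) + ⋯ + L(y_n,q) − q + log n, where L(y,q) = max(log‖y‖, q + log|y·u|). -/
open scoped RealInnerProductSpace
open Finset

noncomputable section

section AuxHadamard
open Matrix

lemma my_trace_eq_sum_eigs {m : ℕ} {A : Matrix (Fin m) (Fin m) ℝ} (hA : A.IsHermitian) :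
    A.trace = ∑ i, hA.eigenvalues i := by
  simpa using hA.trace_eq_sum_eigenvalues

lemma my_det_le_one {m : ℕ} {A : Matrix (Fin m) (Fin m) ℝ} (hA : A.PosSemidef)
    (htr : A.trace = m) : A.det ≤ 1 := by
  rcases Nat.eq_zero_or_pos m with hm | hm
  · subst hm; simp [Matrix.det_isEmpty]
  have hev := hA.eigenvalues_nonneg
  have hdet : A.det = ∏ i, hA.1.eigenvalues i := by
    simpa using hA.1.det_eq_prod_eigenvalues
  have hsum : ∑ i, hA.1.eigenvalues i = m := by
    rw [← my_trace_eq_sum_eigs hA.1, htr]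
  have hm' : (0:ℝ) < m := by exact_mod_cast hm
  have amgm := Real.geom_mean_le_arith_mean (univ : Finset (Fin m)) (fun _ => 1)
    (fun i => hA.1.eigenvalues i) (fun _ _ => zero_le_one) (by simp [hm'.le]; positivity)
    (fun i _ => hev i)
  simp only [Real.rpow_one, one_mul, Finset.sum_const, Finset.card_univ, Fintype.card_fin,
    nsmul_eq_mul, mul_one, hsum] at amgm
  rw [div_self hm'.ne'] at amgm
  have hx : (0:ℝ) ≤ ∏ i, hA.1.eigenvalues i := Finset.prod_nonneg fun i _ => hev i
  have : (∏ i, hA.1.eigenvalues i) = ((∏ i, hA.1.eigenvalues i) ^ ((m:ℝ))⁻¹) ^ (m:ℕ) := by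
    rw [← Real.rpow_natCast _ m, ← Real.rpow_mul hx, inv_mul_cancel₀ hm'.ne', Real.rpow_one]
  rw [hdet, this]
  exact pow_le_one₀ (Real.rpow_nonneg hx _) amgm

lemma my_hadamard {m : ℕ} (A : Matrix (Fin m) (Fin m) ℝ) :
    |A.det| ≤ ∏ i, Real.sqrt (∑ j, A i j ^ 2) := by
  by_cases h0 : ∃ i, ∑ j, A i j ^ 2 = 0
  · obtain ⟨i, hi⟩ := h0
    have hrow : ∀ j, A i j = 0 := by
      intro j
      have := (Finset.sum_eq_zero_iff_of_nonneg (fun k _ => sq_nonneg (A i k))).mp hi j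
        (Finset.mem_univ j)
      exact pow_eq_zero_iff two_ne_zero |>.mp this
    rw [Matrix.det_eq_zero_of_row_eq_zero i hrow, abs_zero]
    exact Finset.prod_nonneg fun i _ => Real.sqrt_nonneg _
  push_neg at h0
  set r : Fin m → ℝ := fun i => ∑ j, A i j ^ 2 with hr_def
  have hr : ∀ i, 0 < r i := fun i =>
    lt_of_le_of_ne (Finset.sum_nonneg fun k _ => sq_nonneg _) (Ne.symm (h0 i))
  set B : Matrix (Fin m) (Fin m) ℝ := Matrix.of fun i j => A i j / Real.sqrt (r i) with hB_def
  have hAB : A = Matrix.diagonal (fun i => Real.sqrt (r i)) * B := by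
    ext i j
    simp only [Matrix.diagonal_mul, hB_def, Matrix.of_apply]
    rw [mul_div_cancel₀ _ (Real.sqrt_ne_zero'.mpr (hr i))]
  have hGps : (B * Bᵀ).PosSemidef := by
    have := Matrix.posSemidef_self_mul_conjTranspose B
    rwa [Matrix.conjTranspose_eq_transpose_of_trivial] at this
  have hdiag : ∀ i, (B * Bᵀ) i i = 1 := by
    intro i
    simp only [Matrix.mul_apply, Matrix.transpose_apply, hB_def, Matrix.of_apply]
    have he : ∀ j : Fin m, A i j / Real.sqrt (r i) * (A i j / Real.sqrt (r i))
        = A i j ^ 2 / r i := fun j => by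
      rw [div_mul_div_comm, ← sq, ← sq, Real.sq_sqrt (hr i).le]
    rw [Finset.sum_congr rfl fun j _ => he j, ← Finset.sum_div]
    exact div_self (hr i).ne'
  have htr : (B * Bᵀ).trace = m := by
    rw [Matrix.trace]
    simp only [Matrix.diag]
    rw [Finset.sum_congr rfl fun i _ => hdiag i]
    simp
  have hdetG := my_det_le_one hGps htr
  rw [Matrix.det_mul, Matrix.det_transpose, ← sq] at hdetG
  have hB1 : |B.det| ≤ 1 := (sq_le_one_iff_abs_le_one _).mp hdetG
  calc |A.det| = (∏ i, Real.sqrt (r i)) * |B.det| := by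
        rw [hAB, Matrix.det_mul, Matrix.det_diagonal, abs_mul,
          abs_of_nonneg (Finset.prod_nonneg fun i _ => Real.sqrt_nonneg _)]
    _ ≤ (∏ i, Real.sqrt (r i)) * 1 :=
        mul_le_mul_of_nonneg_left hB1 (Finset.prod_nonneg fun i _ => Real.sqrt_nonneg _)
    _ = ∏ i, Real.sqrt (r i) := mul_one _


end AuxHadamard

/-- A vector of `ℝⁿ` has integer coordinates. -/
def IsIntVec {n : ℕ} (x : EuclideanSpace ℝ (Fin n)) : Prop := ∀ j, ∃ m : ℤ, x j = m

set_option maxHeartbeats 1000000 in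
/-- Let `u` be a unit vector of `ℝⁿ` and `y₁,…,y_n` linearly
independent points of `ℤⁿ`.  Then for every `q ≥ 0`,
`log ‖y₁ ∧ ⋯ ∧ y_n‖ ≤ L(y₁,q) + ⋯ + L(y_n,q) − q + log n`, where
`‖y₁ ∧ ⋯ ∧ y_n‖ = |det(y₁,…,y_n)|` and
`L(y,q) = max (log ‖y‖) (q + log |y·u|)`. -/
theorem stmt4 (n : ℕ) (hn : 1 ≤ n)
    (u : EuclideanSpace ℝ (Fin n)) (hu : ‖u‖ = 1)
    (y : Fin n → EuclideanSpace ℝ (Fin n))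
    (hyint : ∀ i, IsIntVec (y i)) (hind : LinearIndependent ℝ y) :
    ∀ q : ℝ, 0 ≤ q →
      Real.log |Matrix.det (Matrix.of fun i j => y i j)|
        ≤ (∑ i : Fin n, max (Real.log ‖y i‖) (q + Real.log |⟪y i, u⟫|)) - q
            + Real.log n := by
  intro q hq
  classical
  set a : Fin n → ℝ := fun i => ⟪y i, u⟫ with ha_def
  set z : Fin n → EuclideanSpace ℝ (Fin n) := fun i => y i - a i • u with hz_def
  set Y : Matrix (Fin n) (Fin n) ℝ := Matrix.of fun i j => y i j with hY_def
  -- coordinates of u square-sum to 1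
  have husq : ∑ j, u j ^ 2 = 1 := by
    have h1 : Real.sqrt (∑ j, ‖u j‖ ^ 2) = 1 := by rw [← EuclideanSpace.norm_eq, hu]
    have := Real.sqrt_eq_one.mp h1
    simpa [Real.norm_eq_abs, sq_abs] using this
  have hu0 : u ≠ 0 := by
    intro h; rw [h, norm_zero] at hu; exact one_ne_zero hu.symm
  -- z i coordinates
  have hzc : ∀ i j, z i j = y i j - a i * u j := by
    intro i j; simp [hz_def]
  -- z i ⟂ u, in coordinates
  have hai : ∀ i, a i = ∑ j, y i j * u j := by
    intro i
    simp [ha_def, PiLp.inner_apply, RCLike.inner_apply, mul_comm]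
  have hzu : ∀ i, ∑ j, z i j * u j = 0 := by
    intro i
    have h2 : ∑ j, z i j * u j = ∑ j, (y i j * u j - a i * u j ^ 2) := by
      apply Finset.sum_congr rfl; intro j _; rw [hzc]; ring
    rw [h2, Finset.sum_sub_distrib, ← Finset.mul_sum, husq, ← hai, mul_one, sub_self]
  -- ‖z i‖ ≤ ‖y i‖
  have hzy : ∀ i, ‖z i‖ ≤ ‖y i‖ := by
    intro i
    have h1 : ‖z i‖ ^ 2 = ‖y i‖ ^ 2 - a i ^ 2 := by
      rw [hz_def]
      simp only [norm_sub_sq_real, real_inner_smul_right, norm_smul, Real.norm_eq_abs, hu,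
        mul_one]
      rw [sq_abs]
      ring
    have h2 : ‖z i‖ ^ 2 ≤ ‖y i‖ ^ 2 := by rw [h1]; nlinarith [sq_nonneg (a i)]
    have := abs_le_of_sq_le_sq h2 (norm_nonneg _)
    rwa [abs_of_nonneg (norm_nonneg _)] at this
  -- split each row
  set m₁ : Fin n → Fin n → ℝ := fun i j => a i * u j with hm1_def
  set m₂ : Fin n → Fin n → ℝ := fun i j => z i j with hm2_def
  have hsplit : Y.det = ∑ s : Finset (Fin n),
      Matrix.det (Matrix.of (s.piecewise m₁ m₂)) := by
    have h1 : (fun i j => y i j) = m₁ + m₂ := by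
      funext i j
      simp only [Pi.add_apply, hm1_def, hm2_def, hzc]
      ring
    have h2 := MultilinearMap.map_add_univ
      (Matrix.detRowAlternating (n := Fin n) (R := ℝ)).toMultilinearMap m₁ m₂
    simp only [AlternatingMap.coe_multilinearMap] at h2
    rw [hY_def]
    show Matrix.detRowAlternating (Matrix.of fun i j => y i j) = _
    rw [h1]
    exact h2
  have hzero : ∀ s : Finset (Fin n), (¬ ∃ i, s = {i}) →
      Matrix.det (Matrix.of (s.piecewise m₁ m₂)) = 0 := by
    intro s hs
    rcases s.eq_empty_or_nonempty with rfl | hne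
    · rw [Finset.piecewise_empty]
      apply Matrix.exists_mulVec_eq_zero_iff.mp
      refine ⟨fun j => u j, ?_, ?_⟩
      · intro h
        apply hu0
        have : ∀ j, u j = 0 := fun j => congrFun h j
        apply PiLp.ext
        intro j; rw [this j]; rfl
      · funext i
        simpa [Matrix.mulVec, dotProduct, hm2_def] using hzu i
    · have hcard : 1 < s.card := by
        rcases Nat.lt_or_ge s.card 2 with h | h
        · interval_cases h' : s.card
          · exact absurd (Finset.card_eq_zero.mp h') hne.ne_empty
          · exact absurd (Finset.card_eq_one.mp h') hs
        · omega
      obtain ⟨i, hi, j, hj, hij⟩ := Finset.one_lt_card.mp hcard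
      by_cases hai : a i = 0
      · apply Matrix.det_eq_zero_of_row_eq_zero i
        intro k
        simp [Finset.piecewise_eq_of_mem _ _ _ hi, hm1_def, hai]
      · apply Matrix.exists_vecMul_eq_zero_iff.mp
        refine ⟨Pi.single i (a j) - Pi.single j (a i), ?_, ?_⟩
        · intro h
          have := congrFun h j
          simp only [Pi.sub_apply, Pi.single_eq_same, Pi.zero_apply] at this
          rw [Pi.single_eq_of_ne (Ne.symm hij)] at this
          apply hai; linarith
        · rw [Matrix.sub_vecMul, Matrix.single_vecMul, Matrix.single_vecMul]
          funext k
          simp only [Pi.sub_apply, Pi.smul_apply, smul_eq_mul, Matrix.row_apply, Matrix.of_apply, Pi.zero_apply,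
            Finset.piecewise_eq_of_mem _ _ _ hi, Finset.piecewise_eq_of_mem _ _ _ hj, hm1_def]
          ring
  -- each y i is nonzero
  have hypos : ∀ i, 0 < ‖y i‖ := fun i => norm_pos_iff.mpr (hind.ne_zero i)
  -- Hadamard bound on singleton terms
  have hsing : ∀ i : Fin n,
      |Matrix.det (Matrix.of (({i} : Finset (Fin n)).piecewise m₁ m₂))|
        ≤ |a i| * ∏ k ∈ univ.erase i, ‖y k‖ := by
    intro i
    refine le_trans (my_hadamard _) ?_
    have hrow : ∀ k, Real.sqrt (∑ j, (Matrix.of (({i} : Finset (Fin n)).piecewise m₁ m₂)) k j ^ 2)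
        ≤ if k = i then |a i| else ‖y k‖ := by
      intro k
      by_cases hk : k = i
      · subst hk
        rw [if_pos rfl]
        have he : ∀ j, (Matrix.of (({k} : Finset (Fin n)).piecewise m₁ m₂)) k j ^ 2
            = a k ^ 2 * u j ^ 2 := by
          intro j
          rw [Matrix.of_apply, Finset.piecewise_eq_of_mem _ _ _ (Finset.mem_singleton_self k),
            hm1_def]
          ring
        rw [Finset.sum_congr rfl fun j _ => he j, ← Finset.mul_sum, husq, mul_one,
          Real.sqrt_sq_eq_abs]
      · rw [if_neg hk]
        have he : ∀ j, (Matrix.of (({i} : Finset (Fin n)).piecewise m₁ m₂)) k j ^ 2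
            = ‖z k j‖ ^ 2 := by
          intro j
          rw [Matrix.of_apply, Finset.piecewise_eq_of_notMem _ _ _
            (by simp [hk] : k ∉ ({i} : Finset (Fin n))), hm2_def, Real.norm_eq_abs, sq_abs]
        rw [Finset.sum_congr rfl fun j _ => he j, ← EuclideanSpace.norm_eq]
        exact hzy k
    refine le_trans (Finset.prod_le_prod (fun k _ => Real.sqrt_nonneg _) fun k _ => hrow k) ?_
    rw [← Finset.mul_prod_erase univ _ (Finset.mem_univ i), if_pos rfl]
    apply le_of_eq
    congr 1
    apply Finset.prod_congr rfl
    intro k hk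
    rw [if_neg (Finset.ne_of_mem_erase hk)]
  -- the sum over subsets reduces to singletons
  have habs : |Y.det| ≤ ∑ i, |a i| * ∏ k ∈ univ.erase i, ‖y k‖ := by
    rw [hsplit]
    have hS : ∑ s ∈ Finset.univ.image (fun i : Fin n => ({i} : Finset (Fin n))),
        Matrix.det (Matrix.of (s.piecewise m₁ m₂))
        = ∑ s : Finset (Fin n), Matrix.det (Matrix.of (s.piecewise m₁ m₂)) := by
      apply Finset.sum_subset (Finset.subset_univ _)
      intro s _ hs
      apply hzero
      intro ⟨i, hi⟩
      exact hs (Finset.mem_image.mpr ⟨i, Finset.mem_univ i, hi.symm⟩)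
    rw [← hS, Finset.sum_image (fun x _ y _ h => Finset.singleton_injective h)]
    refine le_trans (Finset.abs_sum_le_sum_abs _ _) ?_
    exact Finset.sum_le_sum fun i _ => hsing i
  -- determinant is nonzero
  have hdet0 : Y.det ≠ 0 := by
    intro h
    obtain ⟨v, hv0, hv⟩ := Matrix.exists_vecMul_eq_zero_iff.mpr h
    have hLI := hind.map' (WithLp.linearEquiv 2 ℝ (∀ _ : Fin n, ℝ)).toLinearMap
      (LinearEquiv.ker _)
    have hvy : ∑ i, v i • ((WithLp.linearEquiv 2 ℝ (∀ _ : Fin n, ℝ)).toLinearMap ∘ y) i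
        = 0 := by
      funext k
      have h1 := congrFun hv k
      simp only [Matrix.vecMul, dotProduct, Pi.zero_apply, hY_def, Matrix.of_apply]
        at h1
      simpa [Finset.sum_apply, WithLp.linearEquiv_apply] using h1
    have := Fintype.linearIndependent_iff.mp hLI v hvy
    exact hv0 (funext this)
  -- combine
  set Mx : Fin n → ℝ := fun i => max ‖y i‖ (Real.exp q * |a i|) with hMx_def
  have hMxpos : ∀ i, 0 < Mx i := fun i => lt_max_of_lt_left (hypos i)
  have hstep : ∀ i, |a i| * ∏ k ∈ univ.erase i, ‖y k‖
      ≤ Real.exp (-q) * ∏ k, Mx k := by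
    intro i
    have h1 : |a i| ≤ Real.exp (-q) * Mx i := by
      have : |a i| = Real.exp (-q) * (Real.exp q * |a i|) := by
        rw [← mul_assoc, ← Real.exp_add]; simp
      rw [this]
      exact mul_le_mul_of_nonneg_left (le_max_right _ _) (Real.exp_pos _).le
    have h2 : ∏ k ∈ univ.erase i, ‖y k‖ ≤ ∏ k ∈ univ.erase i, Mx k :=
      Finset.prod_le_prod (fun k _ => (norm_nonneg _)) (fun k _ => le_max_left _ _)
    calc |a i| * ∏ k ∈ univ.erase i, ‖y k‖
        ≤ (Real.exp (-q) * Mx i) * ∏ k ∈ univ.erase i, Mx k := by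
          apply mul_le_mul h1 h2 (Finset.prod_nonneg fun k _ => norm_nonneg _)
          positivity
      _ = Real.exp (-q) * ∏ k, Mx k := by
          rw [mul_assoc, Finset.mul_prod_erase univ _ (Finset.mem_univ i)]
  have hfin : |Y.det| ≤ n * (Real.exp (-q) * ∏ k, Mx k) := by
    refine habs.trans ?_
    refine le_trans (Finset.sum_le_sum fun i _ => hstep i) ?_
    rw [Finset.sum_const, Finset.card_univ, Fintype.card_fin, nsmul_eq_mul]
  have hpos : 0 < |Y.det| := abs_pos.mpr hdet0
  have hlog := Real.log_le_log hpos hfin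
  refine hlog.trans ?_
  have hn0 : (0:ℝ) < n := by exact_mod_cast hn
  have hprodpos : 0 < ∏ k, Mx k := Finset.prod_pos fun k _ => hMxpos k
  have hB : Real.exp (-q) * ∏ k, Mx k ≠ 0 := (mul_pos (Real.exp_pos _) hprodpos).ne'
  rw [Real.log_mul hn0.ne' hB, Real.log_mul (Real.exp_ne_zero _)
    hprodpos.ne', Real.log_exp, Real.log_prod fun k _ => (hMxpos k).ne']
  have hterm : ∀ i, Real.log (Mx i)
      ≤ max (Real.log ‖y i‖) (q + Real.log |a i|) := by
    intro i
    rcases max_choice ‖y i‖ (Real.exp q * |a i|) with h | h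
    · rw [hMx_def]
      simp only
      rw [h]
      exact le_max_left _ _
    · by_cases hai : a i = 0
      · rw [hMx_def]
        simp only
        rw [hai, abs_zero, mul_zero, max_eq_left (norm_nonneg _)]
        exact le_max_left _ _
      · rw [hMx_def]
        simp only
        rw [h, Real.log_mul (Real.exp_ne_zero _) (abs_ne_zero.mpr hai), Real.log_exp]
        exact le_max_right _ _
  have hsumle : ∑ i, Real.log (Mx i)
      ≤ ∑ i, max (Real.log ‖y i‖) (q + Real.log |a i|) :=
    Finset.sum_le_sum fun i _ => hterm i
  have hgoal : (∑ i : Fin n, max (Real.log ‖y i‖) (q + Real.log |⟪y i, u⟫|))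
      = ∑ i, max (Real.log ‖y i‖) (q + Real.log |a i|) := rfl
  rw [hgoal]
  linarith
end
end

section
/- Let n ≥ 2, let h, k, ℓ ∈ {1,…,n} with h ≤ ℓ and k < ℓ, let (x_1,…,x_n) be a basis of ℤ^n, and let A be a real number with A ≥ 2^ℓ(‖x_1‖ + ⋯ + ‖x_ℓ‖). Then there exists a basis (y_1,…,y_n) of ℤ^n such that: (1) (y_1,…,ŷ_ℓ,…,y_n) = (x_1,…,x̂_h,…,x_n); (2) y_ℓ ∈ x_h + ℤ-span(x_1,…,x̂_h,…,x_ℓ); (3) A ≤ ‖y_ℓ‖ ≤ 2A; (4) dist(y_ℓ, span(y_1,…,ŷ_k,…,y_{ℓ−1})) ≥ 1 − 1/2^{ℓ−1}. -/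
open scoped RealInnerProductSpace
open Finset

noncomputable section

/-- The distance `dist(x,V) = ‖proj_{V^⊥} x‖ / ‖x‖` (equal to `1` when
`V = ⊥`). -/
def distToSub {n : ℕ} (x : EuclideanSpace ℝ (Fin n))
    (V : Submodule ℝ (EuclideanSpace ℝ (Fin n))) : ℝ :=
  ‖(Submodule.orthogonalProjection Vᗮ x : EuclideanSpace ℝ (Fin n))‖ / ‖x‖

namespace Stmt13Aux

variable {E : Type*} [NormedAddCommGroup E] [NormedSpace ℝ E]

lemma exists_coeff (u v : E) (hv : v ≠ 0) {A : ℝ} (hu : ‖u‖ < A) :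
    ∃ c : ℕ, A ≤ ‖u + (c : ℝ) • v‖ ∧ ‖u + (c : ℝ) • v‖ ≤ A + ‖v‖ := by
  classical
  have hvpos : 0 < ‖v‖ := norm_pos_iff.mpr hv
  have hex : ∃ c : ℕ, A ≤ ‖u + (c : ℝ) • v‖ := by
    obtain ⟨c, hc⟩ := exists_nat_gt ((A + ‖u‖) / ‖v‖)
    refine ⟨c, ?_⟩
    have h2 : (c : ℝ) • v = (u + (c : ℝ) • v) - u := by abel
    have h3 : ‖(u + (c : ℝ) • v) - u‖ ≤ ‖u + (c : ℝ) • v‖ + ‖u‖ := norm_sub_le _ _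
    rw [← h2] at h3
    have h4 : ‖(c : ℝ) • v‖ = (c : ℝ) * ‖v‖ := by
      rw [norm_smul, Real.norm_natCast]
    have h5 : A + ‖u‖ < (c : ℝ) * ‖v‖ := (div_lt_iff₀ hvpos).mp hc
    linarith
  have hc : A ≤ ‖u + ((Nat.find hex : ℕ) : ℝ) • v‖ := Nat.find_spec hex
  have hc0 : Nat.find hex ≠ 0 := by
    intro h0
    rw [h0] at hc
    simp at hc
    linarith
  obtain ⟨c', hc'⟩ : ∃ c', Nat.find hex = c' + 1 := ⟨Nat.find hex - 1, by omega⟩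
  have hmin : ¬ A ≤ ‖u + (c' : ℝ) • v‖ := Nat.find_min hex (by omega)
  push_neg at hmin
  refine ⟨Nat.find hex, hc, ?_⟩
  have hstep : u + ((Nat.find hex : ℕ) : ℝ) • v = (u + (c' : ℝ) • v) + v := by
    rw [hc']; push_cast; rw [add_smul, one_smul]; abel
  calc ‖u + ((Nat.find hex : ℕ) : ℝ) • v‖ = ‖(u + (c' : ℝ) • v) + v‖ := by rw [hstep]
  _ ≤ ‖u + (c' : ℝ) • v‖ + ‖v‖ := norm_add_le _ _
  _ ≤ A + ‖v‖ := by linarith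

lemma reduce {ι : Type*} [DecidableEq ι] (s : Finset ι) (b : ι → E) (w : E)
    (hw : w ∈ Submodule.span ℝ (b '' ↑s)) :
    ∃ d : ι → ℤ, ‖w - ∑ j ∈ s, (d j : ℝ) • b j‖ ≤ ∑ j ∈ s, ‖b j‖ := by
  rw [Finsupp.mem_span_image_iff_linearCombination] at hw
  obtain ⟨f, hfs, hfw⟩ := hw
  have hw' : w = ∑ j ∈ s, f j • b j := by
    rw [← hfw, Finsupp.linearCombination_apply_of_mem_supported ℝ hfs]
  refine ⟨fun j => ⌊f j⌋, ?_⟩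
  have heq : w - ∑ j ∈ s, ((⌊f j⌋ : ℝ)) • b j = ∑ j ∈ s, (f j - ⌊f j⌋) • b j := by
    rw [hw', ← Finset.sum_sub_distrib]
    exact Finset.sum_congr rfl fun j _ => (sub_smul _ _ _).symm
  rw [heq]
  refine le_trans (norm_sum_le _ _) (Finset.sum_le_sum ?_)
  intro j _
  rw [norm_smul]
  have h0 : 0 ≤ f j - ⌊f j⌋ := by linarith [Int.floor_le (f j)]
  have h1 : f j - ⌊f j⌋ ≤ 1 := by linarith [Int.lt_floor_add_one (f j)]
  have h2 : ‖(f j - (⌊f j⌋ : ℝ))‖ ≤ 1 := by rw [Real.norm_eq_abs, abs_of_nonneg h0]; exact h1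
  exact mul_le_of_le_one_left (norm_nonneg _) h2

lemma succAbove_val {n : ℕ} (p : Fin (n + 1)) (i : Fin n) :
    ((p.succAbove i : Fin (n + 1)) : ℕ) = if (i : ℕ) < (p : ℕ) then (i : ℕ) else (i : ℕ) + 1 := by
  rcases lt_or_ge (Fin.castSucc i) p with hc | hc
  · rw [Fin.succAbove_of_castSucc_lt _ _ hc]
    have h1 : (i : ℕ) < (p : ℕ) := by simpa using Fin.lt_def.mp hc
    simp [Fin.coe_castSucc, h1]
  · rw [Fin.succAbove_of_le_castSucc _ _ hc]
    have h1 : (p : ℕ) ≤ (i : ℕ) := by simpa using Fin.le_def.mp hc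
    rw [Fin.val_succ, if_neg (by omega)]

def ev {n : ℕ} (t : Fin n) : EuclideanSpace ℝ (Fin n) →ₗ[ℝ] ℝ where
  toFun z := z t
  map_add' _ _ := rfl
  map_smul' _ _ := rfl

@[simp] lemma ev_apply {n : ℕ} (t : Fin n) (z : EuclideanSpace ℝ (Fin n)) : ev t z = z t := rfl

end Stmt13Aux

open Stmt13Aux

set_option maxHeartbeats 1000000

/-- Let `n = m+1 ≥ 2`, let `h ≤ ℓ`, `k < ℓ` be indices in
`{1,…,n}` (here zero-based elements of `Fin n`), let `(x₁,…,x_n)` be a basis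
of `ℤⁿ`, and let `A ≥ 2^ℓ (‖x₁‖+⋯+‖x_ℓ‖)`.  Then there is a basis
`(y₁,…,y_n)` of `ℤⁿ` with:
(1) `(y₁,…,ŷ_ℓ,…,y_n) = (x₁,…,x̂_h,…,x_n)`;
(2) `y_ℓ ∈ x_h + ⟨x₁,…,x̂_h,…,x_ℓ⟩_ℤ`;
(3) `A ≤ ‖y_ℓ‖ ≤ 2A`;
(4) `dist(y_ℓ, span(y₁,…,ŷ_k,…,y_{ℓ−1})) ≥ 1 − 1/2^{ℓ−1}`. -/
theorem stmt13 (m : ℕ) (hm : 1 ≤ m)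
    (h k l : Fin (m + 1)) (hhl : h ≤ l) (hkl : k < l)
    (x : Fin (m + 1) → EuclideanSpace ℝ (Fin (m + 1)))
    (hint : ∀ i, IsIntVec (x i))
    (hbasis : |Matrix.det (Matrix.of fun i j => x i j)| = 1)
    (A : ℝ)
    (hA : (2 : ℝ) ^ ((l : ℕ) + 1) * ∑ j ∈ Finset.univ.filter (· ≤ l), ‖x j‖ ≤ A) :
    ∃ y : Fin (m + 1) → EuclideanSpace ℝ (Fin (m + 1)),
      (∀ i, IsIntVec (y i)) ∧
      |Matrix.det (Matrix.of fun i j => y i j)| = 1 ∧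
      (∀ i : Fin m, y (l.succAbove i) = x (h.succAbove i)) ∧
      (y l - x h ∈ Submodule.span ℤ (x '' {j | j ≠ h ∧ j ≤ l})) ∧
      (A ≤ ‖y l‖ ∧ ‖y l‖ ≤ 2 * A) ∧
      1 - 1 / 2 ^ (l : ℕ)
        ≤ distToSub (y l) (Submodule.span ℝ (y '' {j | j ≠ k ∧ j < l})) := by
  classical
  -- linear independence of the rows
  have hdet : (Matrix.of fun i j => x i j).det ≠ 0 := by
    intro h0; rw [h0] at hbasis; simp at hbasis
  have hli' : LinearIndependent ℝ (fun i => (Matrix.of fun i j => x i j) i) :=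
    Matrix.linearIndependent_rows_iff_isUnit.mpr
      ((Matrix.isUnit_iff_isUnit_det _).mpr (isUnit_iff_ne_zero.mpr hdet))
  have hli : LinearIndependent ℝ x := by
    have hmap := hli'.map' ((WithLp.linearEquiv 2 ℝ (Fin (m+1) → ℝ)).symm.toLinearMap)
      (LinearMap.ker_eq_bot.mpr (LinearEquiv.injective _))
    exact hmap
  -- index bookkeeping
  have hlm : (l : ℕ) ≤ m := Fin.is_le l
  have hkl' : (k : ℕ) < (l : ℕ) := hkl
  have hhl' : (h : ℕ) ≤ (l : ℕ) := hhl
  set k1 : Fin m := ⟨(k : ℕ), by omega⟩ with hk1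
  set k' : Fin (m + 1) := h.succAbove k1 with hk'def
  have hk'v : (k' : ℕ) = if (k : ℕ) < (h : ℕ) then (k : ℕ) else (k : ℕ) + 1 := succAbove_val h k1
  have hk'l : (k' : ℕ) ≤ (l : ℕ) := by rw [hk'v]; split_ifs <;> omega
  have hk'h : k' ≠ h := Fin.succAbove_ne h k1
  set Sf : Finset (Fin (m + 1)) := Finset.univ.filter (fun i => i ≤ l ∧ i ≠ h ∧ i ≠ k') with hSf
  set V : Submodule ℝ (EuclideanSpace ℝ (Fin (m+1))) := Submodule.span ℝ (x '' ↑Sf) with hV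
  -- sum bounds
  set St : ℝ := ∑ j ∈ Finset.univ.filter (· ≤ l), ‖x j‖ with hSt
  have hxh_le : ‖x h‖ ≤ St := by
    refine Finset.single_le_sum (fun j _ => norm_nonneg _) ?_
    simp [Finset.mem_filter, hhl]
  have hxk'_le : ‖x k'‖ ≤ St := by
    refine Finset.single_le_sum (fun j _ => norm_nonneg _) ?_
    simp [Finset.mem_filter]
    exact Fin.le_def.mpr hk'l
  set B : ℝ := ∑ j ∈ Sf, ‖x j‖ with hB
  have hBnn : 0 ≤ B := Finset.sum_nonneg fun j _ => norm_nonneg _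
  have hB_le : B ≤ St := by
    refine Finset.sum_le_sum_of_subset_of_nonneg ?_ (fun j _ _ => norm_nonneg _)
    intro j hj
    simp only [hSf, Finset.mem_filter, Finset.mem_univ, true_and] at hj
    simp [Finset.mem_filter, hj.1]
  have hxh0 : x h ≠ 0 := hli.ne_zero h
  have hStpos : 0 < St := lt_of_lt_of_le (norm_pos_iff.mpr hxh0) hxh_le
  have h4le : (4 : ℝ) ≤ 2 ^ ((l : ℕ) + 1) := by
    calc (4 : ℝ) = 2 ^ 2 := by norm_num
    _ ≤ 2 ^ ((l : ℕ) + 1) := by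
        apply pow_le_pow_right₀ one_le_two
        omega
  have hA4 : 4 * St ≤ A := le_trans (by nlinarith) hA
  have hApos : 0 < A := by linarith
  have hEpos : (0 : ℝ) < 2 ^ (l : ℕ) := pow_pos two_pos _
  have hEB : 2 ^ (l : ℕ) * St ≤ A / 2 := by
    have h2 : (2 : ℝ) ^ ((l : ℕ) + 1) = 2 * 2 ^ (l : ℕ) := by rw [pow_succ]; ring
    rw [h2] at hA
    linarith
  -- the projection
  set p := Submodule.orthogonalProjection Vᗮ with hp
  have hproj_le : ∀ z : EuclideanSpace ℝ (Fin (m+1)),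
      ‖(p z : EuclideanSpace ℝ (Fin (m+1)))‖ ≤ ‖z‖ := by
    intro z
    have h1 := Submodule.orthogonalProjection_norm_le Vᗮ
    have h2 := (Submodule.orthogonalProjection Vᗮ).le_opNorm z
    have h3 : ‖(p z : EuclideanSpace ℝ (Fin (m+1)))‖ = ‖p z‖ := rfl
    rw [h3, hp]
    nlinarith [norm_nonneg z]
  have hx_mem_V : ∀ j ∈ Sf, x j ∈ V := fun j hj =>
    Submodule.subset_span ⟨j, Finset.mem_coe.mpr hj, rfl⟩
  have hVp0 : ∀ z ∈ V, (p z : EuclideanSpace ℝ (Fin (m+1))) = 0 := by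
    intro z hz
    have h0 : p z = 0 :=
      Submodule.orthogonalProjectionOnto_apply_of_mem_orthogonal (Submodule.le_orthogonal_orthogonal V hz)
    rw [h0]; rfl
  set u : EuclideanSpace ℝ (Fin (m+1)) := (p (x h) : EuclideanSpace ℝ (Fin (m+1))) with hu
  set v : EuclideanSpace ℝ (Fin (m+1)) := (p (x k') : EuclideanSpace ℝ (Fin (m+1))) with hv
  have hk'Sf : k' ∉ Sf := by simp [hSf]
  have hv0 : v ≠ 0 := by
    intro h0
    have hsub : x k' - (p (x k') : EuclideanSpace ℝ (Fin (m+1))) ∈ Vᗮᗮ :=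
      Submodule.sub_starProjection_mem_orthogonal (K := Vᗮ) (x k')
    rw [Submodule.orthogonal_orthogonal] at hsub
    rw [← hv, h0, sub_zero] at hsub
    exact hli.notMem_span_image (by simpa using hk'Sf) hsub
  have hu_lt : ‖u‖ < A := lt_of_le_of_lt (le_trans (hproj_le _) hxh_le) (by linarith)
  obtain ⟨c, hcA, hcU⟩ := exists_coeff u v hv0 hu_lt
  -- lattice reduction of the `V`-component
  set z0 : EuclideanSpace ℝ (Fin (m+1)) := x h + (c : ℝ) • x k' with hz0
  set w0 : EuclideanSpace ℝ (Fin (m+1)) := z0 - (p z0 : EuclideanSpace ℝ (Fin (m+1))) with hw0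
  have hw0V : w0 ∈ V := by
    have hh : z0 - (p z0 : EuclideanSpace ℝ (Fin (m+1))) ∈ Vᗮᗮ :=
      Submodule.sub_starProjection_mem_orthogonal (K := Vᗮ) z0
    rwa [Submodule.orthogonal_orthogonal] at hh
  obtain ⟨d, hd⟩ := reduce Sf x w0 hw0V
  set q : EuclideanSpace ℝ (Fin (m+1)) := ∑ j ∈ Sf, (d j : ℝ) • x j with hq
  have hqV : q ∈ V := Submodule.sum_mem _ fun j hj =>
    Submodule.smul_mem _ _ (hx_mem_V j hj)
  set yl : EuclideanSpace ℝ (Fin (m+1)) := x h + (c : ℝ) • x k' - q with hyl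
  have hpz0 : (p z0 : EuclideanSpace ℝ (Fin (m+1))) = u + (c : ℝ) • v := by
    rw [hz0, map_add, map_smul]
    rfl
  have hpyl : (p yl : EuclideanSpace ℝ (Fin (m+1))) = u + (c : ℝ) • v := by
    have h1 : yl = z0 - q := by rw [hyl, hz0]
    rw [h1, map_sub]
    have h2 : ((p z0 - p q : Vᗮ) : EuclideanSpace ℝ (Fin (m+1)))
        = (p z0 : EuclideanSpace ℝ (Fin (m+1))) - (p q : EuclideanSpace ℝ (Fin (m+1))) := rfl
    rw [h2, hVp0 q hqV, sub_zero, hpz0]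
  set P : ℝ := ‖u + (c : ℝ) • v‖ with hP
  have hPyl : ‖(p yl : EuclideanSpace ℝ (Fin (m+1)))‖ = P := by rw [hpyl]
  have hPyl_le : P ≤ ‖yl‖ := by rw [← hPyl]; exact hproj_le yl
  have hyl_ge : A ≤ ‖yl‖ := le_trans hcA hPyl_le
  have hylpos : 0 < ‖yl‖ := lt_of_lt_of_le hApos hyl_ge
  have hr : yl - (p yl : EuclideanSpace ℝ (Fin (m+1))) = w0 - q := by
    rw [hpyl, ← hpz0, hyl, hw0, hz0]; abel
  have hyl_le' : ‖yl‖ ≤ P + B := by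
    have h3 : (p yl : EuclideanSpace ℝ (Fin (m+1)))
        + (yl - (p yl : EuclideanSpace ℝ (Fin (m+1)))) = yl := by abel
    have h2 := norm_add_le ((p yl : EuclideanSpace ℝ (Fin (m+1))))
      (yl - (p yl : EuclideanSpace ℝ (Fin (m+1))))
    rw [h3, hPyl, hr] at h2
    have h4 : ‖w0 - q‖ ≤ B := hd
    linarith
  have hv_le : ‖v‖ ≤ St := le_trans (hproj_le _) hxk'_le
  have hyl_le : ‖yl‖ ≤ 2 * A := by linarith
  -- the new basis
  set y : Fin (m+1) → EuclideanSpace ℝ (Fin (m+1)) :=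
    l.insertNth yl (fun i => x (h.succAbove i)) with hy
  have hy_l : y l = yl := by rw [hy]; simp
  have hy_sa : ∀ i : Fin m, y (l.succAbove i) = x (h.succAbove i) := by
    intro i; rw [hy]; simp
  set e : Equiv.Perm (Fin (m+1)) := (finSuccEquiv' l).trans (finSuccEquiv' h).symm with he
  have he_l : e l = h := by
    simp [he, Equiv.trans_apply, finSuccEquiv'_at, finSuccEquiv'_symm_none]
  have he_sa : ∀ i, e (l.succAbove i) = h.succAbove i := by
    intro i
    simp [he, Equiv.trans_apply, finSuccEquiv'_succAbove, finSuccEquiv'_symm_some]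
  have hy_off : ∀ i, i ≠ l → y i = x (e i) := by
    intro i hi
    obtain ⟨j, rfl⟩ := Fin.exists_succAbove_eq hi
    rw [hy_sa, he_sa]
  -- integrality
  choose g hg using fun i j => hint i j
  have hIsInt : ∀ i, IsIntVec (y i) := by
    intro i
    by_cases hi : i = l
    · subst hi
      intro t
      rw [hy_l]
      refine ⟨g h t + (c : ℤ) * g k' t - ∑ j ∈ Sf, d j * g j t, ?_⟩
      have hco : yl t = ev t (x h) + (c : ℝ) * ev t (x k')
          - ∑ j ∈ Sf, (d j : ℝ) * ev t (x j) := by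
        show ev t (x h + (c : ℝ) • x k' - q) = _
        rw [map_sub, map_add, map_smul, hq, map_sum]
        simp [smul_eq_mul]
      rw [hco]
      simp only [ev_apply, hg]
      push_cast
      ring
    · intro t
      rw [hy_off i hi]
      exact hint _ t
  -- determinant
  have hhSf : h ∉ Sf := by simp [hSf]
  have hhk' : h ≠ k' := fun hh => hk'h hh.symm
  set co : Fin (m+1) → ℝ := fun j =>
    (if j = h then 1 else 0) + (if j = k' then (c : ℝ) else 0) +
      (if j ∈ Sf then -((d j : ℝ)) else 0) with hco
  have hco_h : co h = 1 := by
    simp [hco, hhk', hhSf]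
  have hylrow : yl = ∑ j, co j • x j := by
    simp only [hco, add_smul, Finset.sum_add_distrib, ite_smul, zero_smul, one_smul]
    rw [Fintype.sum_ite_eq' h x, Fintype.sum_ite_eq' k' (fun j => (c : ℝ) • x j),
      Fintype.sum_ite_mem Sf (fun j => (-(d j : ℝ)) • x j)]
    rw [hyl, hq]
    simp only [neg_smul, Finset.sum_neg_distrib]
    abel
  set M1 : Matrix (Fin (m+1)) (Fin (m+1)) ℝ := Matrix.of fun i j => x (e i) j with hM1
  have hNrow : (Matrix.of fun i j => y i j) = M1.updateRow l (fun t => yl t) := by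
    ext i t
    by_cases hi : i = l
    · subst hi
      rw [Matrix.updateRow_self]
      simp [hy_l]
    · rw [Matrix.updateRow_ne hi]
      simp [hM1, hy_off i hi]
  have hrow_sum : (fun t => yl t) = ∑ j, co (e j) • (M1 j) := by
    funext t
    have h1 : (∑ j, co (e j) • (M1 j)) t = ∑ j, co (e j) * (M1 j t) := by
      rw [Finset.sum_apply]
      simp [smul_eq_mul]
    rw [h1]
    rw [hylrow]
    have h2 : (∑ j, co j • x j) t = ∑ j, co j * (x j t) := by
      rw [show (∑ j, co j • x j) t = ev t (∑ j, co j • x j) from rfl, map_sum]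
      simp [smul_eq_mul]
    rw [h2]
    have h3 : ∀ j, co (e j) * (M1 j t) = co (e j) * (x (e j) t) := fun j => rfl
    simp only [h3]
    exact (Equiv.sum_comp e (fun j => co j * x j t)).symm
  have hdetN : |Matrix.det (Matrix.of fun i j => y i j)| = 1 := by
    rw [hNrow, hrow_sum, Matrix.det_updateRow_sum, he_l, hco_h, one_smul]
    have h1 : M1 = (Matrix.of fun i j => x i j).submatrix e id := rfl
    rw [h1, Matrix.det_permute, abs_mul]
    rcases Int.units_eq_one_or (Equiv.Perm.sign e) with hs | hs <;>
      rw [hs] <;> simp [hbasis]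
  -- membership (2)
  have hmem2 : y l - x h ∈ Submodule.span ℤ (x '' {j | j ≠ h ∧ j ≤ l}) := by
    rw [hy_l]
    have h1 : yl - x h = (c : ℝ) • x k' - q := by rw [hyl]; abel
    rw [h1]
    refine sub_mem ?_ ?_
    · have h2 : ((c : ℝ)) • x k' = ((c : ℤ)) • x k' := by
        rw [← Int.cast_smul_eq_zsmul ℝ]; norm_num
      rw [h2]
      exact Submodule.smul_mem _ _
        (Submodule.subset_span ⟨k', ⟨hk'h, Fin.le_def.mpr hk'l⟩, rfl⟩)
    · rw [hq]
      refine Submodule.sum_mem _ fun j hj => ?_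
      simp only [hSf, Finset.mem_filter, Finset.mem_univ, true_and] at hj
      have h2 : ((d j : ℝ)) • x j = (d j) • x j := by
        rw [← Int.cast_smul_eq_zsmul ℝ]
      rw [h2]
      exact Submodule.smul_mem _ _
        (Submodule.subset_span ⟨j, ⟨hj.2.1, hj.1⟩, rfl⟩)
  -- the image set for (4)
  have himg : y '' {j | j ≠ k ∧ j < l} = x '' ↑Sf := by
    ext z
    constructor
    · rintro ⟨j, ⟨hjk, hjl⟩, rfl⟩
      have hjl' : (j : ℕ) < (l : ℕ) := hjl
      set j1 : Fin m := ⟨(j : ℕ), by omega⟩ with hj1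
      have hsa1 : l.succAbove j1 = j := by
        apply Fin.ext
        rw [succAbove_val]
        simp only [hj1]
        rw [if_pos hjl']
      have hyj : y j = x (h.succAbove j1) := by rw [← hsa1, hy_sa]
      refine ⟨h.succAbove j1, ?_, hyj.symm⟩
      have hv1 := succAbove_val h j1
      refine Finset.mem_coe.mpr (Finset.mem_filter.mpr
        ⟨Finset.mem_univ _, ?_, Fin.succAbove_ne h j1, ?_⟩)
      · rw [Fin.le_def, hv1]
        simp only [hj1]
        split_ifs <;> omega
      · intro hcon
        have hj1k : j1 = k1 := Fin.succAbove_right_injective (p := h) hcon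
        apply hjk
        apply Fin.ext
        have := congrArg Fin.val hj1k
        simpa [hj1, hk1] using this
    · rintro ⟨i, hi, rfl⟩
      have hi' := Finset.mem_filter.mp (Finset.mem_coe.mp hi)
      obtain ⟨-, hil, hih, hik'⟩ := hi'
      obtain ⟨j1, hj1⟩ := Fin.exists_succAbove_eq hih
      have hv1 := succAbove_val h j1
      rw [hj1] at hv1
      have hil' : (i : ℕ) ≤ (l : ℕ) := hil
      have hj1l : (j1 : ℕ) < (l : ℕ) := by
        split_ifs at hv1 <;> omega
      have hv2 := succAbove_val l j1
      rw [if_pos hj1l] at hv2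
      refine ⟨l.succAbove j1, ⟨?_, ?_⟩, ?_⟩
      · intro hcon
        apply hik'
        have hj1k : (j1 : ℕ) = (k : ℕ) := by rw [hcon] at hv2; omega
        have : j1 = k1 := Fin.ext (by simpa [hk1] using hj1k)
        rw [← hj1, this]
      · exact Fin.lt_def.mpr (by omega)
      · rw [hy_sa, hj1]
  have hspan_eq : Submodule.span ℝ (y '' {j | j ≠ k ∧ j < l}) = V := by
    rw [himg, hV]
  -- the distance bound
  have hdist : 1 - 1 / 2 ^ (l : ℕ)
      ≤ distToSub (y l) (Submodule.span ℝ (y '' {j | j ≠ k ∧ j < l})) := by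
    rw [hspan_eq, hy_l]
    unfold distToSub
    rw [← hp, hPyl]
    rw [le_div_iff₀ hylpos]
    have h1 : ‖yl‖ - P ≤ B := by linarith
    have h2' : 2 ^ (l : ℕ) * B ≤ 2 ^ (l : ℕ) * St :=
      mul_le_mul_of_nonneg_left hB_le hEpos.le
    have h2 : 2 ^ (l : ℕ) * B ≤ ‖yl‖ := by linarith
    have h3 : B ≤ ‖yl‖ / 2 ^ (l : ℕ) := by
      rw [le_div_iff₀ hEpos]
      linarith [h2]
    have h4 : ‖yl‖ - ‖yl‖ / 2 ^ (l : ℕ) ≤ P := by linarith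
    calc (1 - 1 / 2 ^ (l : ℕ)) * ‖yl‖ = ‖yl‖ - ‖yl‖ / 2 ^ (l : ℕ) := by ring
    _ ≤ P := h4
  exact ⟨y, hIsInt, hdetN, hy_sa, hmem2,
    ⟨by rw [hy_l]; exact hyl_ge, by rw [hy_l]; exact hyl_le⟩, hdist⟩
end
end
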